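/- arXiv:2410.23067 — 9 statements merged into one kernel-verified Lean document; each statement's English description precedes it below -/
import Mathlib

section
/- Let x ∈ ℝ^m, j ∈ [m], 1 ≤ p < ∞, and α ∈ (0,1). Suppose H = (H_1,...,H_m) is a random vector with values in [D] such that ℙ(H_i = H_j) ≤ 1/D for all i ≠ j. Define the bucket B_j = {i ∈ [m] : H_i = H_j}. Then ℙ(‖x_{B_j \ {j}}‖_p > ‖x_{[m] \ {j}}‖_p / (αD)^{1/p}) ≤ α, where x_S denotes the restriction of x to coordinates in S. -/
open MeasureTheory Finset

/-- The `ℓ_p`-(quasi)norm of the restriction of `x : ℝ^m` to a finite index set `S`. -/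
noncomputable def pnormOn {m : ℕ} (p : ℝ) (x : Fin m → ℝ) (S : Finset (Fin m)) : ℝ :=
  (∑ i ∈ S, |x i| ^ p) ^ (1 / p)

/-- **Hashing lemma.** If the hash vector `H` satisfies `ℙ(H_i = H_j) ≤ 1/D` for all `i ≠ j`,
then with probability at least `1 - α` the `ℓ_p`-norm of `x` restricted to the bucket of `j`
(excluding `j` itself) is at most `‖x_{[m] \ {j}}‖_p / (α D)^(1/p)`. -/
theorem stmt0 {Ω : Type*} [MeasurableSpace Ω] (μ : Measure Ω) [IsProbabilityMeasure μ]
    {m D : ℕ} (hD : 0 < D) (x : Fin m → ℝ) (j : Fin m) (p α : ℝ)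
    (hp : 1 ≤ p) (hα : α ∈ Set.Ioo (0 : ℝ) 1)
    (H : Ω → Fin m → Fin D)
    (hhash : ∀ i : Fin m, i ≠ j → μ {ω | H ω i = H ω j} ≤ 1 / (D : ENNReal)) :
    μ {ω | pnormOn p x (Finset.univ.filter fun i => H ω i = H ω j ∧ i ≠ j)
        > pnormOn p x (Finset.univ.filter fun i => i ≠ j) / (α * D) ^ (1 / p)}
      ≤ ENNReal.ofReal α := by
  obtain ⟨hα0, hα1⟩ := hα
  have hp0 : 0 < p := lt_of_lt_of_le one_pos hp
  have hip : 0 < 1 / p := by positivity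
  set a : Fin m → ℝ := fun i => |x i| ^ p with ha
  have ha0 : ∀ i, 0 ≤ a i := fun i => Real.rpow_nonneg (abs_nonneg _) _
  set S : ℝ := ∑ i ∈ Finset.univ.filter (fun i => i ≠ j), a i with hS
  have hS0 : 0 ≤ S := Finset.sum_nonneg fun i _ => ha0 i
  have hDR : (0:ℝ) < D := Nat.cast_pos.mpr hD
  have hαD : (0:ℝ) < α * D := by positivity
  -- reduce the pnormOn event to a linear one
  set c : ℝ := S / (α * D) with hc
  have hc0 : 0 ≤ c := div_nonneg hS0 hαD.le
  have hevent : ∀ ω : Ω,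
      (pnormOn p x (Finset.univ.filter fun i => H ω i = H ω j ∧ i ≠ j)
        > pnormOn p x (Finset.univ.filter fun i => i ≠ j) / (α * D) ^ (1 / p)) →
      c < ∑ i ∈ Finset.univ.filter (fun i => H ω i = H ω j ∧ i ≠ j), a i := by
    intro ω hω
    have hY0 : (0:ℝ) ≤ ∑ i ∈ Finset.univ.filter (fun i => H ω i = H ω j ∧ i ≠ j), a i :=
      Finset.sum_nonneg fun i _ => ha0 i
    have : c ^ (1/p) < (∑ i ∈ Finset.univ.filter (fun i => H ω i = H ω j ∧ i ≠ j), a i) ^ (1/p) := by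
      have : pnormOn p x (Finset.univ.filter fun i => i ≠ j) / (α * D) ^ (1 / p)
          = c ^ (1/p) := by
        rw [hc, Real.div_rpow hS0 hαD.le]
        rfl
      rw [← this]
      exact hω
    exact (Real.rpow_lt_rpow_iff hc0 hY0 hip).mp this
  -- measurable hulls of the collision events
  set B : Fin m → Set Ω := fun i => toMeasurable μ {ω | H ω i = H ω j} with hB
  have hBmeas : ∀ i, MeasurableSet (B i) := fun i => measurableSet_toMeasurable _ _
  have hBsub : ∀ i, {ω | H ω i = H ω j} ⊆ B i := fun i => subset_toMeasurable _ _
  have hBμ : ∀ i, i ≠ j → μ (B i) ≤ 1 / (D : ENNReal) := by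
    intro i hij
    rw [hB]; rw [measure_toMeasurable]; exact hhash i hij
  set g : Ω → ENNReal := fun ω =>
    ∑ i ∈ Finset.univ.filter (fun i => i ≠ j),
      (B i).indicator (fun _ => ENNReal.ofReal (a i)) ω with hg
  have hgmeas : Measurable g := by
    apply Finset.measurable_sum
    intro i _
    exact (measurable_const.indicator (hBmeas i))
  -- lintegral of g
  have hgint : ∫⁻ ω, g ω ∂μ ≤ ENNReal.ofReal S / D := by
    rw [hg]
    rw [MeasureTheory.lintegral_finset_sum _
      (fun i _ => measurable_const.indicator (hBmeas i))]
    have : ∀ i ∈ Finset.univ.filter (fun i => i ≠ j),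
        ∫⁻ ω, (B i).indicator (fun _ => ENNReal.ofReal (a i)) ω ∂μ
          ≤ ENNReal.ofReal (a i) * (1 / D) := by
      intro i hi
      rw [MeasureTheory.lintegral_indicator_const (hBmeas i)]
      exact mul_le_mul_right (hBμ i (Finset.mem_filter.mp hi).2) _
    refine le_trans (Finset.sum_le_sum this) ?_
    rw [← Finset.sum_mul]
    rw [← ENNReal.ofReal_sum_of_nonneg (fun i _ => ha0 i)]
    simp [ENNReal.div_eq_inv_mul, mul_comm]
    exact le_rfl
  -- the set inclusion into a measurable superset
  have hsub : {ω | pnormOn p x (Finset.univ.filter fun i => H ω i = H ω j ∧ i ≠ j)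
        > pnormOn p x (Finset.univ.filter fun i => i ≠ j) / (α * D) ^ (1 / p)}
      ⊆ {ω | ENNReal.ofReal c < g ω} := by
    intro ω hω
    have h1 := hevent ω hω
    have h2 : ENNReal.ofReal (∑ i ∈ Finset.univ.filter (fun i => H ω i = H ω j ∧ i ≠ j), a i)
        ≤ g ω := by
      rw [ENNReal.ofReal_sum_of_nonneg (fun i _ => ha0 i), hg]
      have heq : ∀ i ∈ Finset.univ.filter (fun i => H ω i = H ω j ∧ i ≠ j),
          ENNReal.ofReal (a i) = (B i).indicator (fun _ => ENNReal.ofReal (a i)) ω := by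
        intro i hi
        have := (Finset.mem_filter.mp hi).2.1
        rw [Set.indicator_of_mem (hBsub i this)]
      rw [Finset.sum_congr rfl heq]
      apply Finset.sum_le_sum_of_subset
      intro i hi
      simp only [Finset.mem_filter] at hi ⊢
      exact ⟨hi.1, hi.2.2⟩
    calc ENNReal.ofReal c < ENNReal.ofReal (∑ i ∈ Finset.univ.filter
          (fun i => H ω i = H ω j ∧ i ≠ j), a i) := by
          exact (ENNReal.ofReal_lt_ofReal_iff_of_nonneg hc0).mpr h1
      _ ≤ g ω := h2
  refine le_trans (measure_mono hsub) ?_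
  -- if S = 0 the superset would still work; handle via cases
  by_cases hSpos : S = 0
  · -- then every a i = 0 for i ≠ j, so g = 0 and c = 0, the set is empty
    have hai : ∀ i ∈ Finset.univ.filter (fun i => i ≠ j), a i = 0 := by
      intro i hi
      exact (Finset.sum_eq_zero_iff_of_nonneg (fun i _ => ha0 i)).mp (hS ▸ hSpos) i hi
    have : {ω | ENNReal.ofReal c < g ω} = ∅ := by
      ext ω
      simp only [Set.mem_setOf_eq, Set.mem_empty_iff_false, iff_false, not_lt]
      have : g ω = 0 := by
        rw [hg]
        apply Finset.sum_eq_zero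
        intro i hi
        rw [hai i hi]
        simp
      rw [this]
      exact zero_le
    rw [this]
    simp
  · have hSpos' : 0 < S := lt_of_le_of_ne hS0 (Ne.symm hSpos)
    have hcpos : 0 < c := div_pos hSpos' hαD
    have hε0 : ENNReal.ofReal c ≠ 0 := by
      simp [ENNReal.ofReal_pos.mpr hcpos, ne_of_gt]
    have hεtop : ENNReal.ofReal c ≠ ⊤ := ENNReal.ofReal_ne_top
    have hmarkov : ENNReal.ofReal c * μ {ω | ENNReal.ofReal c < g ω}
        ≤ ∫⁻ ω, g ω ∂μ := by
      refine le_trans ?_ (mul_meas_ge_le_lintegral₀ hgmeas.aemeasurable (ENNReal.ofReal c))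
      apply mul_le_mul_right
      apply measure_mono
      intro ω hω
      simp only [Set.mem_setOf_eq] at hω ⊢
      exact hω.le
    have hkey : ENNReal.ofReal c * ENNReal.ofReal α = ENNReal.ofReal S / D := by
      rw [← ENNReal.ofReal_mul hc0, hc]
      have : S / (α * D) * α = S / D := by
        field_simp
      rw [this, ENNReal.ofReal_div_of_pos hDR, ENNReal.ofReal_natCast]
    have := le_trans hmarkov hgint
    rw [← hkey] at this
    exact (ENNReal.mul_le_mul_iff_right hε0 hεtop).mp this
end

section
/- Let 1 ≤ p ≤ 2, x ∈ ℝ^m with ‖x‖_p ≤ 1, γ > 1, ε, δ₀ ∈ (0,1), and j ∈ [m] with |x_j| ≥ ε. Set D = ⌈(γ/ε)^p / δ₀⌉ and let H be a random hash vector into [D] with ℙ(H_i = H_j) ≤ 1/D for i ≠ j. Then ℙ(‖x_{B_j \ {j}}‖_2 ≤ |x_j|/γ) ≥ 1 − δ₀, where B_j = {i : H_i = H_j}. -/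
open MeasureTheory Finset

lemma real_rpow_add_le {a b q : ℝ} (ha : 0 ≤ a) (hb : 0 ≤ b) (hq0 : 0 ≤ q) (hq1 : q ≤ 1) :
    (a + b) ^ q ≤ a ^ q + b ^ q := by
  have := NNReal.rpow_add_le_add_rpow a.toNNReal b.toNNReal hq0 hq1
  have h := NNReal.coe_le_coe.2 this
  simpa [NNReal.coe_rpow, Real.coe_toNNReal _ ha, Real.coe_toNNReal _ hb,
    Real.coe_toNNReal _ (add_nonneg ha hb)] using h

lemma real_sum_rpow_le {ι : Type*} (s : Finset ι) (f : ι → ℝ) {q : ℝ}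
    (hf : ∀ i ∈ s, 0 ≤ f i) (hq0 : 0 < q) (hq1 : q ≤ 1) :
    (∑ i ∈ s, f i) ^ q ≤ ∑ i ∈ s, f i ^ q := by
  induction s using Finset.cons_induction with
  | empty => simp [Real.zero_rpow hq0.ne']
  | cons a s ha ih =>
    rw [Finset.sum_cons, Finset.sum_cons]
    have hfa : 0 ≤ f a := hf a (Finset.mem_cons_self a s)
    have hfs : ∀ i ∈ s, 0 ≤ f i := fun i hi => hf i (Finset.mem_cons.2 (Or.inr hi))
    calc (f a + ∑ i ∈ s, f i) ^ q ≤ f a ^ q + (∑ i ∈ s, f i) ^ q :=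
          real_rpow_add_le hfa (Finset.sum_nonneg hfs) hq0.le hq1
      _ ≤ f a ^ q + ∑ i ∈ s, f i ^ q := by gcongr; exact ih hfs

/-- **Isolation of a heavy hitter by hashing, case `1 ≤ p ≤ 2`.**
With `D = ⌈(γ/ε)^p / δ₀⌉` buckets and a hash vector with pairwise collision
probability at most `1/D`, a coordinate `j` with `|x_j| ≥ ε` satisfies the heavy-hitter
condition `‖x_{B_j \ {j}}‖₂ ≤ |x_j|/γ` with probability at least `1 - δ₀`. -/
theorem stmt2 {Ω : Type*} [MeasurableSpace Ω] (μ : Measure Ω) [IsProbabilityMeasure μ]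
    {m D : ℕ} (x : Fin m → ℝ) (j : Fin m) (p γ ε δ₀ : ℝ)
    (hp1 : 1 ≤ p) (hp2 : p ≤ 2) (hx : pnormOn p x Finset.univ ≤ 1)
    (hγ : 1 < γ) (hε : ε ∈ Set.Ioo (0 : ℝ) 1) (hδ₀ : δ₀ ∈ Set.Ioo (0 : ℝ) 1)
    (hxj : ε ≤ |x j|)
    (hDdef : D = ⌈(γ / ε) ^ p / δ₀⌉₊)
    (H : Ω → Fin m → Fin D)
    (hhash : ∀ i : Fin m, i ≠ j → μ {ω | H ω i = H ω j} ≤ 1 / (D : ENNReal)) :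
    μ {ω | pnormOn 2 x (Finset.univ.filter fun i => H ω i = H ω j ∧ i ≠ j) ≤ |x j| / γ}
      ≥ ENNReal.ofReal (1 - δ₀) := by
  obtain ⟨hε0, hε1⟩ := hε
  obtain ⟨hδ0, hδ1⟩ := hδ₀
  have hγ0 : (0 : ℝ) < γ := lt_trans one_pos hγ
  have hp0 : (0 : ℝ) < p := lt_of_lt_of_le one_pos hp1
  set r : ℝ := |x j| / γ with hr_def
  have hr0 : 0 < r := div_pos (lt_of_lt_of_le hε0 hxj) hγ0
  set t : ℝ := (ε / γ) ^ p with ht_def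
  have hεγ0 : (0 : ℝ) < ε / γ := div_pos hε0 hγ0
  have ht0 : 0 < t := Real.rpow_pos_of_pos hεγ0 p
  set a : Fin m → ℝ := fun i => |x i| ^ p with ha_def
  have ha0 : ∀ i, 0 ≤ a i := fun i => Real.rpow_nonneg (abs_nonneg _) p
  -- total p-th power mass at most 1
  have hsum1 : ∑ i : Fin m, a i ≤ 1 := by
    have hS0 : 0 ≤ ∑ i : Fin m, a i := Finset.sum_nonneg fun i _ => ha0 i
    have hx' : ((∑ i : Fin m, a i) ^ (1 / p)) ^ p ≤ 1 := by
      calc ((∑ i : Fin m, a i) ^ (1 / p)) ^ p ≤ 1 ^ p := by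
            apply Real.rpow_le_rpow (Real.rpow_nonneg hS0 _) _ hp0.le
            exact hx
        _ = 1 := Real.one_rpow p
    rwa [← Real.rpow_mul hS0, one_div, inv_mul_cancel₀ hp0.ne', Real.rpow_one] at hx'
  have hsumE : ∑ i ∈ Finset.univ.erase j, a i ≤ 1 :=
    le_trans (Finset.sum_le_sum_of_subset_of_nonneg (Finset.erase_subset _ _)
      (fun i _ _ => ha0 i)) hsum1
  -- bound on D
  have hD0 : 0 < (D : ℝ) := by
    rw [hDdef]
    have : 0 < (γ / ε) ^ p / δ₀ := div_pos (Real.rpow_pos_of_pos (div_pos hγ0 hε0) p) hδ0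
    exact_mod_cast Nat.ceil_pos.2 this
  have hDN0 : D ≠ 0 := by exact_mod_cast hD0.ne'
  have htinv : (γ / ε) ^ p = t⁻¹ := by
    rw [ht_def, ← Real.inv_rpow hεγ0.le, inv_div]
  have hDinv : (1 : ℝ) / D ≤ δ₀ * t := by
    have hle : t⁻¹ / δ₀ ≤ (D : ℝ) := by rw [hDdef, ← htinv]; exact Nat.le_ceil _
    have h1 : (t⁻¹ / δ₀) * (δ₀ * t) = 1 := by field_simp
    rw [div_le_iff₀ hD0]
    nlinarith [mul_le_mul_of_nonneg_right hle (show (0:ℝ) ≤ δ₀ * t by positivity)]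
  -- the collision sets and their measurable hulls
  set A : Fin m → Set Ω := fun i => {ω | H ω i = H ω j} with hA_def
  set A' : Fin m → Set Ω := fun i => MeasureTheory.toMeasurable μ (A i) with hA'_def
  have hA'meas : ∀ i, MeasurableSet (A' i) := fun i => measurableSet_toMeasurable μ (A i)
  set g : Ω → ENNReal := fun ω =>
    ∑ i ∈ Finset.univ.erase j, (A' i).indicator (fun _ => ENNReal.ofReal (a i)) ω with hg_def
  have hgmeas : Measurable g := by
    apply Finset.measurable_sum
    intro i _
    exact (measurable_const.indicator (hA'meas i))
  -- the bad event is contained in {t ≤ g}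
  have hbad_sub : {ω | ¬ pnormOn 2 x (Finset.univ.filter fun i => H ω i = H ω j ∧ i ≠ j)
      ≤ |x j| / γ} ⊆ {ω | ENNReal.ofReal t ≤ g ω} := by
    intro ω hω
    simp only [Set.mem_setOf_eq, not_le] at hω
    set C : Finset (Fin m) := Finset.univ.filter fun i => H ω i = H ω j ∧ i ≠ j with hC_def
    have hC_sub : C ⊆ Finset.univ.erase j := by
      intro i hi
      rw [hC_def, Finset.mem_filter] at hi
      exact Finset.mem_erase.2 ⟨hi.2.2, Finset.mem_univ i⟩
    set S2 : ℝ := ∑ i ∈ C, |x i| ^ (2 : ℝ) with hS2_def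
    have hS2_0 : 0 ≤ S2 := Finset.sum_nonneg fun i _ => Real.rpow_nonneg (abs_nonneg _) _
    have hω' : r < S2 ^ (1 / (2:ℝ)) := hω
    -- t < ∑_{i ∈ C} a i
    have key : t < ∑ i ∈ C, a i := by
      have h1 : t ≤ r ^ p := by
        rw [ht_def, hr_def]
        have hdiv : ε / γ ≤ |x j| / γ := by gcongr
        exact Real.rpow_le_rpow hεγ0.le hdiv hp0.le
      have h2 : r ^ p < (S2 ^ (1 / (2:ℝ))) ^ p := Real.rpow_lt_rpow hr0.le hω' hp0
      have h3 : (S2 ^ (1 / (2:ℝ))) ^ p = S2 ^ ((1/(2:ℝ)) * p) := (Real.rpow_mul hS2_0 _ _).symm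
      have h4 : S2 ^ ((1/(2:ℝ)) * p) ≤ ∑ i ∈ C, (|x i| ^ (2:ℝ)) ^ ((1/(2:ℝ)) * p) := by
        apply real_sum_rpow_le C _ (fun i _ => Real.rpow_nonneg (abs_nonneg _) _)
        · positivity
        · nlinarith
      have h5 : ∀ i ∈ C, (|x i| ^ (2:ℝ)) ^ ((1/(2:ℝ)) * p) = a i := by
        intro i _
        rw [ha_def, ← Real.rpow_mul (abs_nonneg _)]
        congr 1
        ring
      calc t ≤ r ^ p := h1
        _ < (S2 ^ (1 / (2:ℝ))) ^ p := h2
        _ = S2 ^ ((1/(2:ℝ)) * p) := h3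
        _ ≤ ∑ i ∈ C, (|x i| ^ (2:ℝ)) ^ ((1/(2:ℝ)) * p) := h4
        _ = ∑ i ∈ C, a i := Finset.sum_congr rfl h5
    -- now pass to g
    have hmem : ∀ i ∈ C, (A' i).indicator (fun _ => ENNReal.ofReal (a i)) ω
        = ENNReal.ofReal (a i) := by
      intro i hi
      rw [hC_def, Finset.mem_filter] at hi
      have : ω ∈ A i := hi.2.1
      exact Set.indicator_of_mem (MeasureTheory.subset_toMeasurable μ (A i) this) _
    calc ENNReal.ofReal t ≤ ENNReal.ofReal (∑ i ∈ C, a i) := ENNReal.ofReal_le_ofReal key.le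
      _ = ∑ i ∈ C, ENNReal.ofReal (a i) := ENNReal.ofReal_sum_of_nonneg (fun i _ => ha0 i)
      _ = ∑ i ∈ C, (A' i).indicator (fun _ => ENNReal.ofReal (a i)) ω :=
          (Finset.sum_congr rfl hmem).symm
      _ ≤ g ω := Finset.sum_le_sum_of_subset hC_sub
  -- Markov
  have hmarkov : ENNReal.ofReal t * μ {ω | ENNReal.ofReal t ≤ g ω}
      ≤ ∫⁻ ω, g ω ∂μ := mul_meas_ge_le_lintegral₀ hgmeas.aemeasurable _
  have hlint : ∫⁻ ω, g ω ∂μ ≤ ENNReal.ofReal (δ₀ * t) := by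
    have h1 : ∫⁻ ω, g ω ∂μ
        = ∑ i ∈ Finset.univ.erase j, ENNReal.ofReal (a i) * μ (A' i) := by
      rw [hg_def]
      rw [MeasureTheory.lintegral_finset_sum _
        (fun i _ => measurable_const.indicator (hA'meas i))]
      exact Finset.sum_congr rfl fun i _ => MeasureTheory.lintegral_indicator_const (hA'meas i) _
    have h2 : ∀ i ∈ Finset.univ.erase j, ENNReal.ofReal (a i) * μ (A' i)
        ≤ ENNReal.ofReal (a i) * (1 / (D : ENNReal)) := by
      intro i hi
      apply mul_le_mul_right
      rw [hA'_def]
      rw [MeasureTheory.measure_toMeasurable]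
      exact hhash i (Finset.mem_erase.1 hi).1
    have h3 : ∑ i ∈ Finset.univ.erase j, ENNReal.ofReal (a i) * (1 / (D : ENNReal))
        = (∑ i ∈ Finset.univ.erase j, ENNReal.ofReal (a i)) * (1 / (D : ENNReal)) :=
      (Finset.sum_mul ..).symm
    have h4 : (∑ i ∈ Finset.univ.erase j, ENNReal.ofReal (a i)) ≤ 1 := by
      rw [← ENNReal.ofReal_sum_of_nonneg (fun i _ => ha0 i)]
      calc ENNReal.ofReal (∑ i ∈ Finset.univ.erase j, a i) ≤ ENNReal.ofReal 1 :=
            ENNReal.ofReal_le_ofReal hsumE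
        _ = 1 := ENNReal.ofReal_one
    have h5 : (1 : ENNReal) / (D : ENNReal) ≤ ENNReal.ofReal (δ₀ * t) := by
      rw [one_div, ← ENNReal.ofReal_natCast D, ← ENNReal.ofReal_inv_of_pos hD0]
      apply ENNReal.ofReal_le_ofReal
      rw [← one_div]
      exact hDinv
    calc ∫⁻ ω, g ω ∂μ = ∑ i ∈ Finset.univ.erase j, ENNReal.ofReal (a i) * μ (A' i) := h1
      _ ≤ ∑ i ∈ Finset.univ.erase j, ENNReal.ofReal (a i) * (1 / (D : ENNReal)) :=
          Finset.sum_le_sum h2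
      _ = (∑ i ∈ Finset.univ.erase j, ENNReal.ofReal (a i)) * (1 / (D : ENNReal)) := h3
      _ ≤ 1 * (1 / (D : ENNReal)) := mul_le_mul_left h4 _
      _ = 1 / (D : ENNReal) := one_mul _
      _ ≤ ENNReal.ofReal (δ₀ * t) := h5
  have hbad : μ {ω | ¬ pnormOn 2 x (Finset.univ.filter fun i => H ω i = H ω j ∧ i ≠ j)
      ≤ |x j| / γ} ≤ ENNReal.ofReal δ₀ := by
    have h1 : ENNReal.ofReal t * μ {ω | ENNReal.ofReal t ≤ g ω}
        ≤ ENNReal.ofReal t * ENNReal.ofReal δ₀ := by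
      calc ENNReal.ofReal t * μ {ω | ENNReal.ofReal t ≤ g ω} ≤ ∫⁻ ω, g ω ∂μ := hmarkov
        _ ≤ ENNReal.ofReal (δ₀ * t) := hlint
        _ = ENNReal.ofReal t * ENNReal.ofReal δ₀ := by
            rw [← ENNReal.ofReal_mul ht0.le, mul_comm]
    have h2 : μ {ω | ENNReal.ofReal t ≤ g ω} ≤ ENNReal.ofReal δ₀ :=
      (ENNReal.mul_le_mul_iff_right (by simp [ht0]) ENNReal.ofReal_ne_top).1 h1
    exact le_trans (measure_mono hbad_sub) h2
  -- conclude
  have hunion : (1 : ENNReal) ≤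
      μ {ω | pnormOn 2 x (Finset.univ.filter fun i => H ω i = H ω j ∧ i ≠ j) ≤ |x j| / γ}
      + μ {ω | ¬ pnormOn 2 x (Finset.univ.filter fun i => H ω i = H ω j ∧ i ≠ j)
          ≤ |x j| / γ} := by
    have : (Set.univ : Set Ω) ⊆
        {ω | pnormOn 2 x (Finset.univ.filter fun i => H ω i = H ω j ∧ i ≠ j) ≤ |x j| / γ}
        ∪ {ω | ¬ pnormOn 2 x (Finset.univ.filter fun i => H ω i = H ω j ∧ i ≠ j)
            ≤ |x j| / γ} := by
      intro ω _
      by_cases h : pnormOn 2 x (Finset.univ.filter fun i => H ω i = H ω j ∧ i ≠ j) ≤ |x j| / γ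
      · exact Or.inl h
      · exact Or.inr h
    calc (1 : ENNReal) = μ Set.univ := (measure_univ).symm
      _ ≤ _ := le_trans (measure_mono this) (measure_union_le _ _)
  calc ENNReal.ofReal (1 - δ₀) = 1 - ENNReal.ofReal δ₀ := by
        rw [ENNReal.ofReal_sub _ hδ0.le, ENNReal.ofReal_one]
    _ ≤ μ {ω | pnormOn 2 x (Finset.univ.filter fun i => H ω i = H ω j ∧ i ≠ j) ≤ |x j| / γ} := by
        rw [tsub_le_iff_right]
        exact le_trans hunion (add_le_add_right hbad _)
end

section
/- Let p > 2, x ∈ ℝ^m with ‖x‖_p ≤ 1, γ > 1, ε, δ₀ ∈ (0,1), and j ∈ [m] with |x_j| ≥ ε. Set D = ⌈m^{1−2/p}·(γ/ε)²/δ₀⌉ and let H be a random hash vector into [D] with ℙ(H_i = H_j) ≤ 1/D for i ≠ j. Then ℙ(‖x_{B_j \ {j}}‖_2 ≤ |x_j|/γ) ≥ 1 − δ₀. -/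
open MeasureTheory Finset

/-- Norm comparison: `∑ x_i² ≤ m^{1-2/p} ‖x‖_p²` when `‖x‖_p ≤ 1` and `p > 2`. -/
lemma sum_sq_le_rpow {m : ℕ} (x : Fin m → ℝ) (p : ℝ) (hp : 2 < p)
    (hx : pnormOn p x Finset.univ ≤ 1) :
    ∑ i, (x i) ^ 2 ≤ (m : ℝ) ^ (1 - 2 / p) := by
  have hp0 : 0 < p := by linarith
  set r : ℝ := p / 2 with hr
  have hr1 : 1 < r := by rw [hr]; linarith [(by linarith : 2 < p)]
  have hq : r.HolderConjugate (r / (r - 1)) := Real.HolderConjugate.conjExponent hr1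
  set q : ℝ := r / (r - 1) with hqdef
  -- sum of |x i|^p is at most 1
  have hSnn : 0 ≤ ∑ i, |x i| ^ p := Finset.sum_nonneg fun i _ =>
    Real.rpow_nonneg (abs_nonneg _) _
  have hS1 : ∑ i, |x i| ^ p ≤ 1 := by
    by_contra h
    push_neg at h
    have : (1 : ℝ) < (∑ i, |x i| ^ p) ^ (1 / p) :=
      Real.one_lt_rpow_iff_of_pos (by linarith) |>.mpr (Or.inl ⟨h, by positivity⟩)
    exact absurd hx (by rw [pnormOn]; linarith)
  have holder := Real.inner_le_Lp_mul_Lq_of_nonneg (s := Finset.univ) hq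
    (f := fun i => (x i) ^ 2) (g := fun _ => (1 : ℝ))
    (fun i _ => sq_nonneg _) (fun i _ => zero_le_one)
  have hrw : ∀ i : Fin m, ((x i) ^ 2 : ℝ) ^ r = |x i| ^ p := by
    intro i
    have : ((x i) ^ 2 : ℝ) = |x i| ^ ((2 : ℕ) : ℝ) := by
      rw [Real.rpow_natCast, sq_abs]
    rw [this, ← Real.rpow_mul (abs_nonneg _)]
    congr 1
    push_cast [hr]
    ring
  have h1q : 1 / q = 1 - 2 / p := by
    rw [hqdef, hr]
    field_simp
  have h2 : (∑ i, ((x i) ^ 2) ^ r) ^ (1 / r) ≤ 1 := by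
    rw [show (∑ i, ((x i) ^ 2) ^ r) = ∑ i, |x i| ^ p from Finset.sum_congr rfl fun i _ => hrw i]
    exact Real.rpow_le_one hSnn hS1 (by positivity)
  have h3 : (∑ _i : Fin m, (1 : ℝ) ^ q) ^ (1 / q) = (m : ℝ) ^ (1 - 2/p) := by
    simp [Real.one_rpow, h1q]
  calc ∑ i, (x i) ^ 2 = ∑ i, (x i) ^ 2 * 1 := by simp
    _ ≤ (∑ i, ((x i) ^ 2) ^ r) ^ (1 / r) * (∑ _i : Fin m, (1 : ℝ) ^ q) ^ (1 / q) := holder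
    _ ≤ 1 * (m : ℝ) ^ (1 - 2/p) := by
        rw [h3]
        exact mul_le_mul_of_nonneg_right h2 (Real.rpow_nonneg (Nat.cast_nonneg _) _)
    _ = (m : ℝ) ^ (1 - 2/p) := one_mul _

/-- **Isolation of a heavy hitter by hashing, case `p > 2`.**
With `D = ⌈m^{1-2/p}·(γ/ε)²/δ₀⌉` buckets and a hash vector with pairwise collision
probability at most `1/D`, a coordinate `j` with `|x_j| ≥ ε` satisfies the heavy-hitter
condition `‖x_{B_j \ {j}}‖₂ ≤ |x_j|/γ` with probability at least `1 - δ₀`. -/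
theorem stmt3 {Ω : Type*} [MeasurableSpace Ω] (μ : Measure Ω) [IsProbabilityMeasure μ]
    {m D : ℕ} (x : Fin m → ℝ) (j : Fin m) (p γ ε δ₀ : ℝ)
    (hp : 2 < p) (hx : pnormOn p x Finset.univ ≤ 1)
    (hγ : 1 < γ) (hε : ε ∈ Set.Ioo (0 : ℝ) 1) (hδ₀ : δ₀ ∈ Set.Ioo (0 : ℝ) 1)
    (hxj : ε ≤ |x j|)
    (hDdef : D = ⌈(m : ℝ) ^ (1 - 2 / p) * (γ / ε) ^ 2 / δ₀⌉₊)
    (H : Ω → Fin m → Fin D)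
    (hhash : ∀ i : Fin m, i ≠ j → μ {ω | H ω i = H ω j} ≤ 1 / (D : ENNReal)) :
    μ {ω | pnormOn 2 x (Finset.univ.filter fun i => H ω i = H ω j ∧ i ≠ j) ≤ |x j| / γ}
      ≥ ENNReal.ofReal (1 - δ₀) := by
  have hm : 0 < m := j.pos
  have hγ0 : (0 : ℝ) < γ := by linarith
  have hM0 : (0 : ℝ) < (m : ℝ) ^ (1 - 2 / p) :=
    Real.rpow_pos_of_pos (by exact_mod_cast hm) _
  set M : ℝ := (m : ℝ) ^ (1 - 2 / p) with hMdef
  set t : ℝ := (|x j| / γ) ^ 2 with htdef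
  have hxj0 : (0 : ℝ) < |x j| := lt_of_lt_of_le hε.1 hxj
  have ht0 : (0 : ℝ) < t := by positivity
  -- D is positive
  have hD0 : 0 < D := by
    rw [hDdef]
    have : (0:ℝ) < M * (γ / ε) ^ 2 / δ₀ := by
      have := hε.1; have := hδ₀.1; positivity
    exact Nat.ceil_pos.mpr this
  -- key real inequality
  have hkey : M ≤ (D : ℝ) * t * δ₀ := by
    have hDge : M * (γ / ε) ^ 2 / δ₀ ≤ (D : ℝ) := by rw [hDdef]; exact Nat.le_ceil _
    have htge : (ε / γ) ^ 2 ≤ t := by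
      rw [htdef]
      apply pow_le_pow_left₀ (div_nonneg hε.1.le hγ0.le)
      exact div_le_div_of_nonneg_right hxj hγ0.le
    have hδpos := hδ₀.1
    have hεpos := hε.1
    calc M = (M * (γ / ε) ^ 2 / δ₀) * (ε / γ) ^ 2 * δ₀ := by
            field_simp
          _ ≤ (D : ℝ) * t * δ₀ := by
            apply mul_le_mul_of_nonneg_right _ hδpos.le
            apply mul_le_mul hDge htge (by positivity)
            exact (Nat.cast_nonneg D)
  -- events
  set A : Fin m → Set Ω := fun i => {ω | H ω i = H ω j} with hAdef
  set B : Fin m → Set Ω := fun i => toMeasurable μ (A i) with hBdef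
  set g : Ω → ENNReal := fun ω =>
    ∑ i ∈ Finset.univ.erase j, (B i).indicator (fun _ => ENNReal.ofReal ((x i) ^ 2)) ω
    with hgdef
  have hmeas : ∀ i ∈ Finset.univ.erase j,
      Measurable fun ω => (B i).indicator (fun _ => ENNReal.ofReal ((x i) ^ 2)) ω :=
    fun i _ => measurable_const.indicator (measurableSet_toMeasurable μ _)
  have hgmeas : Measurable g := Finset.measurable_sum _ hmeas
  -- integral bound
  have hint : ∫⁻ ω, g ω ∂μ ≤ ENNReal.ofReal M / D := by
    rw [hgdef]
    rw [lintegral_finset_sum _ hmeas]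
    have step1 : ∀ i ∈ Finset.univ.erase j,
        ∫⁻ ω, (B i).indicator (fun _ => ENNReal.ofReal ((x i) ^ 2)) ω ∂μ
          ≤ ENNReal.ofReal ((x i) ^ 2) * (1 / D) := by
      intro i hi
      rw [lintegral_indicator (measurableSet_toMeasurable μ _)]
      simp only [lintegral_const, Measure.restrict_apply MeasurableSet.univ, Set.univ_inter]
      rw [measure_toMeasurable]
      exact mul_le_mul_right (hhash i (Finset.ne_of_mem_erase hi)) _
    calc ∑ i ∈ Finset.univ.erase j, ∫⁻ ω, (B i).indicator
            (fun _ => ENNReal.ofReal ((x i) ^ 2)) ω ∂μ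
        ≤ ∑ i ∈ Finset.univ.erase j, ENNReal.ofReal ((x i) ^ 2) * (1 / D) :=
          Finset.sum_le_sum step1
      _ = (∑ i ∈ Finset.univ.erase j, ENNReal.ofReal ((x i) ^ 2)) * (1 / D) := by
          rw [Finset.sum_mul]
      _ ≤ ENNReal.ofReal M * (1 / D) := by
          apply mul_le_mul_left
          rw [← ENNReal.ofReal_sum_of_nonneg (fun i _ => sq_nonneg _)]
          apply ENNReal.ofReal_le_ofReal
          calc ∑ i ∈ Finset.univ.erase j, (x i) ^ 2
              ≤ ∑ i, (x i) ^ 2 :=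
                Finset.sum_le_sum_of_subset_of_nonneg (Finset.subset_univ _)
                  (fun i _ _ => sq_nonneg _)
            _ ≤ M := sum_sq_le_rpow x p hp hx
      _ = ENNReal.ofReal M / D := by rw [mul_one_div]
  -- Markov
  have hDne : (D : ENNReal) ≠ 0 := by exact_mod_cast hD0.ne'
  have hbad : μ {ω | ENNReal.ofReal t ≤ g ω} ≤ ENNReal.ofReal δ₀ := by
    have markov := mul_meas_ge_le_lintegral₀ hgmeas.aemeasurable (μ := μ) (ENNReal.ofReal t)
    have hchain : ENNReal.ofReal t * μ {ω | ENNReal.ofReal t ≤ g ω}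
        ≤ ENNReal.ofReal t * ENNReal.ofReal δ₀ := by
      refine le_trans markov (le_trans hint ?_)
      rw [ENNReal.div_le_iff hDne (ENNReal.natCast_ne_top D)]
      rw [← ENNReal.ofReal_mul ht0.le, ← ENNReal.ofReal_natCast,
        ← ENNReal.ofReal_mul (mul_nonneg ht0.le hδ₀.1.le)]
      apply ENNReal.ofReal_le_ofReal
      calc M ≤ (D : ℝ) * t * δ₀ := hkey
        _ = t * δ₀ * (D : ℝ) := by ring
    rwa [ENNReal.mul_le_mul_iff_right (ne_of_gt (ENNReal.ofReal_pos.mpr ht0))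
      ENNReal.ofReal_ne_top] at hchain
  -- pointwise: complement of the good event is contained in the Markov event
  have hsub : ∀ ω : Ω,
      ¬ (pnormOn 2 x (Finset.univ.filter fun i => H ω i = H ω j ∧ i ≠ j) ≤ |x j| / γ) →
      ENNReal.ofReal t ≤ g ω := by
    intro ω hω
    push_neg at hω
    set S := Finset.univ.filter fun i => H ω i = H ω j ∧ i ≠ j with hSdef
    have hsum_eq : ∑ i ∈ S, |x i| ^ (2:ℝ) = ∑ i ∈ S, (x i) ^ 2 := by
      apply Finset.sum_congr rfl
      intro i _
      rw [show ((2:ℝ) = ((2:ℕ):ℝ)) by norm_num, Real.rpow_natCast, sq_abs]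
    have hSnn : (0:ℝ) ≤ ∑ i ∈ S, (x i) ^ 2 := Finset.sum_nonneg fun i _ => sq_nonneg _
    have hlt : t < ∑ i ∈ S, (x i) ^ 2 := by
      have h1 : |x j| / γ < (∑ i ∈ S, (x i) ^ 2) ^ ((1:ℝ)/2) := by
        rw [pnormOn, hsum_eq] at hω; exact hω
      have h2 : ((∑ i ∈ S, (x i) ^ 2) ^ ((1:ℝ)/2)) ^ (2:ℕ) = ∑ i ∈ S, (x i) ^ 2 := by
        rw [← Real.rpow_natCast ((∑ i ∈ S, (x i) ^ 2) ^ ((1:ℝ)/2)) 2,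
          ← Real.rpow_mul hSnn]
        norm_num
      calc t = (|x j| / γ) ^ 2 := htdef
        _ < ((∑ i ∈ S, (x i) ^ 2) ^ ((1:ℝ)/2)) ^ (2:ℕ) := by
            apply pow_lt_pow_left₀ h1 (by positivity) (by norm_num)
        _ = ∑ i ∈ S, (x i) ^ 2 := h2
    have hind : ∀ i ∈ S, ENNReal.ofReal ((x i) ^ 2)
        = (B i).indicator (fun _ => ENNReal.ofReal ((x i) ^ 2)) ω := by
      intro i hi
      rw [hSdef, Finset.mem_filter] at hi
      have hωA : ω ∈ A i := hi.2.1
      have : ω ∈ B i := subset_toMeasurable μ (A i) hωA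
      rw [Set.indicator_of_mem this]
    calc ENNReal.ofReal t ≤ ENNReal.ofReal (∑ i ∈ S, (x i) ^ 2) :=
          ENNReal.ofReal_le_ofReal hlt.le
      _ = ∑ i ∈ S, ENNReal.ofReal ((x i) ^ 2) :=
          ENNReal.ofReal_sum_of_nonneg (fun i _ => sq_nonneg _)
      _ = ∑ i ∈ S, (B i).indicator (fun _ => ENNReal.ofReal ((x i) ^ 2)) ω :=
          Finset.sum_congr rfl hind
      _ ≤ g ω := by
          apply Finset.sum_le_sum_of_subset
          intro i hi
          rw [hSdef, Finset.mem_filter] at hi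
          exact Finset.mem_erase.mpr ⟨hi.2.2, Finset.mem_univ i⟩
  -- combine
  set Good := {ω | pnormOn 2 x (Finset.univ.filter fun i => H ω i = H ω j ∧ i ≠ j) ≤ |x j| / γ}
  have hcover : (Set.univ : Set Ω) ⊆ Good ∪ {ω | ENNReal.ofReal t ≤ g ω} := by
    intro ω _
    by_cases h : pnormOn 2 x (Finset.univ.filter fun i => H ω i = H ω j ∧ i ≠ j) ≤ |x j| / γ
    · exact Or.inl h
    · exact Or.inr (hsub ω h)
  have h1 : (1 : ENNReal) ≤ μ Good + ENNReal.ofReal δ₀ := by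
    calc (1 : ENNReal) = μ Set.univ := (measure_univ (μ := μ)).symm
      _ ≤ μ (Good ∪ {ω | ENNReal.ofReal t ≤ g ω}) := measure_mono hcover
      _ ≤ μ Good + μ {ω | ENNReal.ofReal t ≤ g ω} := measure_union_le _ _
      _ ≤ μ Good + ENNReal.ofReal δ₀ := add_le_add_right hbad _
  rw [ge_iff_le, show ENNReal.ofReal (1 - δ₀) = 1 - ENNReal.ofReal δ₀ by
    rw [ENNReal.ofReal_sub _ hδ₀.1.le, ENNReal.ofReal_one]]
  exact tsub_le_iff_right.mpr h1
end

section
/- Let J ⊆ [m], j* ∈ J, and x ∈ ℝ^m satisfy the heavy-hitter condition ‖x_{J \ {j*}}‖_2 ≤ |x_{j*}|/√5 with x_{j*} ≠ 0. Let (a_{ij}) for i ∈ [k], j ∈ J be i.i.d. uniform ±1 random variables and s_i = sgn(∑_{j∈J} a_{ij} x_j) (with sgn(0)=1). Then for each fixed i, ℙ(s_i ≠ sgn(x_{j*})·a_{i,j*}) ≤ exp(−5/2) < 1/12. -/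
open Finset MeasureTheory

/-- Sign function with the convention `sgn 0 = 1`. -/
noncomputable def sgn (t : ℝ) : ℝ := if t < 0 then -1 else 1

/-- The `±1` value encoded by a Boolean. -/
def pm (b : Bool) : ℝ := if b then 1 else -1

lemma sgn_sq (u : ℝ) : sgn u ^ 2 = 1 := by
  unfold sgn; split <;> norm_num

lemma sgn_ne_one {T : ℝ} (h : sgn T ≠ 1) : T < 0 := by
  by_contra hT; simp [sgn, hT] at h

lemma sgn_ne_neg_one {T : ℝ} (h : sgn T ≠ -1) : 0 ≤ T := by
  by_contra hT; push_neg at hT; simp [sgn, hT] at h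

/-- Key pointwise estimate: on the bad event, the noise dominates the heavy hitter. -/
lemma lemA {m : ℕ} (J : Finset (Fin m)) (jstar : Fin m) (hj : jstar ∈ J)
    (x : Fin m → ℝ) (hxj : x jstar ≠ 0) (ω : Fin m → Bool)
    (hω : sgn (∑ j ∈ J, pm (ω j) * x j) ≠ sgn (x jstar) * pm (ω jstar)) :
    |x jstar| ≤ ∑ j ∈ J.erase jstar, pm (ω jstar) * pm (ω j) * (-(sgn (x jstar)) * x j) := by
  classical
  have hsplit : ∑ j ∈ J, pm (ω j) * x j
      = pm (ω jstar) * x jstar + ∑ j ∈ J.erase jstar, pm (ω j) * x j :=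
    (Finset.add_sum_erase J _ hj).symm
  rw [hsplit] at hω
  set S := ∑ j ∈ J.erase jstar, pm (ω j) * x j with hS
  have hRHS : ∑ j ∈ J.erase jstar, pm (ω jstar) * pm (ω j) * (-(sgn (x jstar)) * x j)
      = pm (ω jstar) * (-(sgn (x jstar))) * S := by
    rw [hS, Finset.mul_sum]
    exact Finset.sum_congr rfl fun j _ => by ring
  rw [hRHS]
  rcases hxj.lt_or_gt with hx | hx <;> cases hb : ω jstar <;>
      rw [hb] at hω <;>
      simp only [sgn, pm, hx, not_lt.2 hx.le, if_true, if_false, if_neg (lt_irrefl _)] at hω ⊢ <;>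
      norm_num at hω ⊢ <;>
      first
        | (rw [abs_of_neg hx]; linarith)
        | (rw [abs_of_pos hx]; linarith)

lemma pm_mul_pm (a b : Bool) : pm b * pm (a == b) = pm a := by
  cases a <;> cases b <;> simp [pm]

/-- Decoupling by the involution `ω ↦ (j ↦ if j = j* then ω j* else ω j == ω j*)`. -/
lemma sum_exp_decouple {m : ℕ} (jstar : Fin m) (J' : Finset (Fin m)) (hJ' : jstar ∉ J')
    (z : Fin m → ℝ) :
    ∑ ω : Fin m → Bool, Real.exp (∑ j ∈ J', pm (ω jstar) * pm (ω j) * z j)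
      = ∑ ω : Fin m → Bool, Real.exp (∑ j ∈ J', pm (ω j) * z j) := by
  classical
  have hΦ : Function.Involutive (fun (ω : Fin m → Bool) (j : Fin m) =>
      if j = jstar then ω jstar else (ω j == ω jstar)) := by
    intro ω
    funext j
    by_cases hjj : j = jstar
    · simp [hjj]
    · simp only [if_neg hjj, if_pos rfl]
      cases ω j <;> cases ω jstar <;> rfl
  refine (Fintype.sum_equiv (hΦ.toPerm _) _ _ fun ω => ?_).symm
  congr 1
  refine Finset.sum_congr rfl fun j hjJ => ?_
  have hne : j ≠ jstar := fun h => hJ' (h ▸ hjJ)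
  show pm (ω j) * z j
      = pm (if jstar = jstar then ω jstar else (ω jstar == ω jstar))
          * pm (if j = jstar then ω jstar else (ω j == ω jstar)) * z j
  rw [if_pos rfl, if_neg hne, pm_mul_pm]

/-- Product bound: the MGF of a Rademacher sum. -/
lemma sum_exp_le {m : ℕ} (J' : Finset (Fin m)) (z : Fin m → ℝ) :
    ∑ ω : Fin m → Bool, Real.exp (∑ j ∈ J', pm (ω j) * z j)
      ≤ 2 ^ m * Real.exp ((∑ j ∈ J', z j ^ 2) / 2) := by
  classical
  have hrw : ∀ ω : Fin m → Bool, Real.exp (∑ j ∈ J', pm (ω j) * z j)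
      = ∏ i : Fin m, (if i ∈ J' then Real.exp (pm (ω i) * z i) else 1) := by
    intro ω
    rw [Real.exp_sum, Fintype.prod_ite_mem]
  calc ∑ ω : Fin m → Bool, Real.exp (∑ j ∈ J', pm (ω j) * z j)
      = ∑ ω : Fin m → Bool, ∏ i : Fin m, (if i ∈ J' then Real.exp (pm (ω i) * z i) else 1) :=
        Finset.sum_congr rfl fun ω _ => hrw ω
    _ = ∏ i : Fin m, ∑ b : Bool, (if i ∈ J' then Real.exp (pm b * z i) else 1) :=
        (Fintype.prod_sum (fun i b => if i ∈ J' then Real.exp (pm b * z i) else 1)).symm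
    _ ≤ ∏ i : Fin m, 2 * Real.exp ((if i ∈ J' then z i ^ 2 else 0) / 2) := by
        refine Finset.prod_le_prod (fun i _ => ?_) (fun i _ => ?_)
        · refine Finset.sum_nonneg fun b _ => ?_
          split <;> positivity
        · rw [Fintype.sum_bool]
          by_cases hi : i ∈ J'
          · simp only [if_pos hi, pm]
            have := Real.cosh_le_exp_half_sq (z i)
            rw [Real.cosh_eq] at this
            calc Real.exp ((if (true : Bool) then (1:ℝ) else -1) * z i)
                  + Real.exp ((if (false : Bool) then (1:ℝ) else -1) * z i)
                = 2 * ((Real.exp (z i) + Real.exp (-z i)) / 2) := by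
                  norm_num; ring
              _ ≤ 2 * Real.exp (z i ^ 2 / 2) := by linarith
          · simp [hi]
            norm_num
    _ = 2 ^ m * Real.exp ((∑ j ∈ J', z j ^ 2) / 2) := by
        rw [Finset.prod_mul_distrib, Finset.prod_const, ← Real.exp_sum]
        congr 1
        · simp
        · congr 1
          rw [← Finset.sum_div]
          congr 1
          simp [Finset.sum_ite_mem]

/-- **Sign agreement under a heavy-hitter condition.**
Let `‖x_{J \ {j*}}‖₂ ≤ |x_{j*}|/√5` with `x_{j*} ≠ 0` and let `(a_j)_{j ∈ J}` be i.i.d.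
uniform `±1` signs (modelled by a uniformly random `ω : Fin m → Bool`). Then the sign
`s = sgn(∑_{j∈J} a_j x_j)` differs from `sgn(x_{j*})·a_{j*}` with probability at most
`exp(-5/2)`, and `exp(-5/2) < 1/12`. -/
theorem stmt8 {m : ℕ} (J : Finset (Fin m)) (jstar : Fin m) (hj : jstar ∈ J)
    (x : Fin m → ℝ) (hxj : x jstar ≠ 0)
    (hHH : (∑ j ∈ J.erase jstar, |x j| ^ 2) ^ ((1 : ℝ) / 2) ≤ |x jstar| / Real.sqrt 5) :
    (@PMF.toMeasure (Fin m → Bool) ⊤ (PMF.uniformOfFintype _))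
        {ω | sgn (∑ j ∈ J, pm (ω j) * x j) ≠ sgn (x jstar) * pm (ω jstar)}
      ≤ ENNReal.ofReal (Real.exp (-(5 / 2)))
    ∧ Real.exp (-(5 / 2)) < 1 / 12 := by
  classical
  -- the numerical bound
  have hnum : Real.exp (-(5 / 2)) < 1 / 12 := by
    have h1 : (2.7182818283 : ℝ) < Real.exp 1 := Real.exp_one_gt_d9
    have h2 : (144 : ℝ) < Real.exp 1 ^ 5 := by
      calc (144:ℝ) < 2.7182818283 ^ 5 := by norm_num
        _ < Real.exp 1 ^ 5 := by gcongr <;> norm_num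
    have h3 : Real.exp 1 ^ 5 = Real.exp (5/2 : ℝ) * Real.exp (5/2 : ℝ) := by
      rw [Real.exp_one_pow, ← Real.exp_add]
      norm_num
    have h4 : (12 : ℝ) < Real.exp (5/2) := by nlinarith [Real.exp_pos (5/2 : ℝ)]
    rw [Real.exp_neg]
    rw [show ((5:ℝ)/2) = (5/2 : ℝ) from rfl]
    rw [inv_lt_comm₀ (Real.exp_pos _) (by norm_num : (0:ℝ) < 1/12)]
    rw [show ((1:ℝ)/12)⁻¹ = 12 by norm_num]
    exact h4
  refine ⟨?_, hnum⟩
  set J' := J.erase jstar with hJ'def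
  have hjJ' : jstar ∉ J' := Finset.notMem_erase _ _
  set σ2 := ∑ j ∈ J', x j ^ 2 with hσ2
  have hσ2nonneg : 0 ≤ σ2 := Finset.sum_nonneg fun j _ => sq_nonneg _
  have habs : ∑ j ∈ J', |x j| ^ 2 = σ2 :=
    Finset.sum_congr rfl fun j _ => sq_abs _
  have hxabs : 0 < |x jstar| := abs_pos.mpr hxj
  have hHH' : σ2 ≤ x jstar ^ 2 / 5 := by
    have hnn : (0:ℝ) ≤ ∑ j ∈ J', |x j| ^ 2 := by rw [habs]; exact hσ2nonneg
    have h1 : ((∑ j ∈ J', |x j| ^ 2) ^ ((1:ℝ)/2)) ^ (2:ℕ) ≤ (|x jstar| / Real.sqrt 5) ^ (2:ℕ) :=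
      pow_le_pow_left₀ (Real.rpow_nonneg hnn _) hHH 2
    rw [← Real.rpow_natCast ((∑ j ∈ J', |x j| ^ 2) ^ ((1:ℝ)/2)) 2,
      ← Real.rpow_mul hnn] at h1
    norm_num at h1
    rw [div_pow, Real.sq_sqrt (by norm_num : (0:ℝ) ≤ 5), sq_abs] at h1
    rw [hσ2]
    exact h1
  set P : (Fin m → Bool) → Prop :=
    fun ω => sgn (∑ j ∈ J, pm (ω j) * x j) ≠ sgn (x jstar) * pm (ω jstar) with hP
  -- degenerate case: all other coordinates vanish
  rcases eq_or_lt_of_le hσ2nonneg with hzero | hpos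
  · have hx0 : ∀ j ∈ J', x j = 0 := by
      intro j hj'
      have h0 := (Finset.sum_eq_zero_iff_of_nonneg
        (fun j _ => sq_nonneg (x j))).mp hzero.symm j hj'
      exact pow_eq_zero_iff (two_ne_zero) |>.mp h0
    have hempty : {ω : Fin m → Bool | P ω} = ∅ := by
      ext ω
      simp only [Set.mem_setOf_eq, Set.mem_empty_iff_false, iff_false, hP, ne_eq, not_not]
      have hsum : ∑ j ∈ J, pm (ω j) * x j = pm (ω jstar) * x jstar := by
        rw [← Finset.add_sum_erase J _ hj,
          Finset.sum_eq_zero (fun j hj' => by rw [hx0 j hj', mul_zero]), add_zero]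
      rw [hsum]
      rcases hxj.lt_or_gt with hx | hx <;> cases hb : ω jstar <;>
        simp [sgn, pm, hx, not_lt.2 hx.le, hx.le, lt_irrefl] <;> norm_num [hx, not_lt.2 hx.le]
    rw [show {ω : Fin m → Bool | sgn (∑ j ∈ J, pm (ω j) * x j)
        ≠ sgn (x jstar) * pm (ω jstar)} = {ω | P ω} from rfl, hempty]
    simp
  -- main case
  set t := |x jstar| / σ2 with ht
  have htpos : 0 < t := div_pos hxabs hpos
  set z : Fin m → ℝ := fun j => t * (-(sgn (x jstar)) * x j) with hz
  -- pointwise Chernoff bound on the bad set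
  have hpoint : ∀ ω : Fin m → Bool, P ω →
      (1:ℝ) ≤ Real.exp (∑ j ∈ J', pm (ω jstar) * pm (ω j) * z j - t * |x jstar|) := by
    intro ω hω
    have hA := lemA J jstar hj x hxj ω hω
    have hsum : ∑ j ∈ J', pm (ω jstar) * pm (ω j) * z j
        = t * ∑ j ∈ J', pm (ω jstar) * pm (ω j) * (-(sgn (x jstar)) * x j) := by
      rw [Finset.mul_sum]
      exact Finset.sum_congr rfl fun j _ => by rw [hz]; ring
    have hge : t * |x jstar| ≤ ∑ j ∈ J', pm (ω jstar) * pm (ω j) * z j := by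
      rw [hsum]
      exact mul_le_mul_of_nonneg_left hA htpos.le
    calc (1:ℝ) = Real.exp 0 := Real.exp_zero.symm
      _ ≤ _ := Real.exp_le_exp.mpr (by linarith)
  -- the z's have squared norm t² σ2
  have hzsq : ∑ j ∈ J', z j ^ 2 = t ^ 2 * σ2 := by
    rw [hσ2, Finset.mul_sum]
    refine Finset.sum_congr rfl fun j _ => ?_
    have hzj : z j = t * (-(sgn (x jstar)) * x j) := rfl
    calc z j ^ 2 = t ^ 2 * (sgn (x jstar)) ^ 2 * x j ^ 2 := by rw [hzj]; ring
      _ = t ^ 2 * x j ^ 2 := by rw [sgn_sq]; ring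
  -- the main counting bound
  have key : (((Finset.univ.filter P).card : ℝ)) ≤ Real.exp (-(5/2)) * 2 ^ m := by
    have step1 : (((Finset.univ.filter P).card : ℝ))
        ≤ ∑ ω : Fin m → Bool,
            Real.exp (∑ j ∈ J', pm (ω jstar) * pm (ω j) * z j - t * |x jstar|) := by
      calc (((Finset.univ.filter P).card : ℝ))
          = ∑ _ω ∈ Finset.univ.filter P, (1:ℝ) := by
            rw [Finset.sum_const, nsmul_eq_mul, mul_one]
        _ ≤ ∑ ω ∈ Finset.univ.filter P,
              Real.exp (∑ j ∈ J', pm (ω jstar) * pm (ω j) * z j - t * |x jstar|) :=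
            Finset.sum_le_sum fun ω hω =>
              hpoint ω (Finset.mem_filter.mp hω).2
        _ ≤ _ := Finset.sum_le_sum_of_subset_of_nonneg (Finset.filter_subset _ _)
              (fun _ _ _ => (Real.exp_pos _).le)
    have step2 : ∑ ω : Fin m → Bool,
        Real.exp (∑ j ∈ J', pm (ω jstar) * pm (ω j) * z j - t * |x jstar|)
        = Real.exp (-(t * |x jstar|)) *
            ∑ ω : Fin m → Bool, Real.exp (∑ j ∈ J', pm (ω jstar) * pm (ω j) * z j) := by
      rw [Finset.mul_sum]
      refine Finset.sum_congr rfl fun ω _ => ?_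
      rw [← Real.exp_add]
      congr 1
      ring
    have step3 : ∑ ω : Fin m → Bool, Real.exp (∑ j ∈ J', pm (ω jstar) * pm (ω j) * z j)
        ≤ 2 ^ m * Real.exp (t ^ 2 * σ2 / 2) := by
      rw [sum_exp_decouple jstar J' hjJ' z]
      have := sum_exp_le J' z
      rwa [hzsq] at this
    have hexp : Real.exp (-(t * |x jstar|)) * (2 ^ m * Real.exp (t ^ 2 * σ2 / 2))
        ≤ Real.exp (-(5/2)) * 2 ^ m := by
      rw [show Real.exp (-(t * |x jstar|)) * (2 ^ m * Real.exp (t ^ 2 * σ2 / 2))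
          = Real.exp (t ^ 2 * σ2 / 2 - t * |x jstar|) * 2 ^ m by
            rw [Real.exp_sub, Real.exp_neg]; field_simp]
      have harg : t ^ 2 * σ2 / 2 - t * |x jstar| ≤ -(5/2) := by
        have hteq : t ^ 2 * σ2 / 2 - t * |x jstar| = -(x jstar ^ 2 / (2 * σ2)) := by
          rw [ht]
          field_simp
          ring_nf
          simp [sq_abs]
        rw [hteq]
        have h5 : 5 * σ2 ≤ x jstar ^ 2 := by linarith
        rw [neg_le_neg_iff, le_div_iff₀ (by positivity)]
        linarith
      have := Real.exp_le_exp.mpr harg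
      have h2m : (0:ℝ) ≤ 2 ^ m := by positivity
      nlinarith [Real.exp_pos (t ^ 2 * σ2 / 2 - t * |x jstar|)]
    calc (((Finset.univ.filter P).card : ℝ)) ≤ _ := step1
      _ = _ := step2
      _ ≤ Real.exp (-(t * |x jstar|)) * (2 ^ m * Real.exp (t ^ 2 * σ2 / 2)) := by
          have := Real.exp_pos (-(t * |x jstar|))
          nlinarith [step3, Real.exp_pos (-(t * |x jstar|))]
      _ ≤ _ := hexp
  -- compute the measure
  have hformula : ∀ (s : Set (Fin m → Bool)),
      (@PMF.toMeasure (Fin m → Bool) ⊤ (PMF.uniformOfFintype _)) s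
        = ∑ ω : Fin m → Bool, s.indicator (⇑(PMF.uniformOfFintype (Fin m → Bool))) ω := by
    intro s
    letI : MeasurableSpace (Fin m → Bool) := ⊤
    haveI : MeasurableSingletonClass (Fin m → Bool) :=
      ⟨fun _ => MeasurableSpace.measurableSet_top⟩
    exact PMF.toMeasure_apply_fintype _ s
  have hcard : (Fintype.card (Fin m → Bool)) = 2 ^ m := by
    rw [Fintype.card_fun, Fintype.card_bool, Fintype.card_fin]
  have hμ : (@PMF.toMeasure (Fin m → Bool) ⊤ (PMF.uniformOfFintype _)) {ω | P ω}
      = ((Finset.univ.filter P).card : ENNReal) * ((2:ENNReal) ^ m)⁻¹ := by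
    rw [hformula]
    have hind : ∀ ω : Fin m → Bool,
        ({ω | P ω} : Set (Fin m → Bool)).indicator
            (⇑(PMF.uniformOfFintype (Fin m → Bool))) ω
          = if P ω then ((2:ENNReal) ^ m)⁻¹ else 0 := by
      intro ω
      rw [Set.indicator_apply]
      simp only [Set.mem_setOf_eq]
      split_ifs with h
      · rw [PMF.uniformOfFintype_apply, hcard]
        push_cast
        rfl
      · rfl
    rw [Finset.sum_congr rfl fun ω _ => hind ω, ← Finset.sum_filter,
      Finset.sum_const, nsmul_eq_mul]
  rw [show {ω : Fin m → Bool | sgn (∑ j ∈ J, pm (ω j) * x j)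
      ≠ sgn (x jstar) * pm (ω jstar)} = {ω | P ω} from rfl, hμ]
  -- transfer the real inequality to ENNReal
  have h2m : ((2:ENNReal) ^ m) ≠ 0 := by positivity
  have h2minf : ((2:ENNReal) ^ m) ≠ ⊤ := by
    exact ENNReal.pow_ne_top (by norm_num)
  calc ((Finset.univ.filter P).card : ENNReal) * ((2:ENNReal) ^ m)⁻¹
      ≤ (ENNReal.ofReal (Real.exp (-(5/2)) * 2 ^ m)) * ((2:ENNReal) ^ m)⁻¹ := by
        gcongr
        rw [← ENNReal.ofReal_natCast]
        exact ENNReal.ofReal_le_ofReal key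
    _ = ENNReal.ofReal (Real.exp (-(5 / 2))) := by
        rw [ENNReal.ofReal_mul (Real.exp_pos _).le]
        rw [show ENNReal.ofReal ((2:ℝ) ^ m) = (2:ENNReal) ^ m by
          rw [ENNReal.ofReal_pow (by norm_num)]; norm_num]
        rw [mul_assoc, ENNReal.mul_inv_cancel h2m h2minf, mul_one]
end

section
/- Let x ∈ ℝ^m, j* ∈ J ⊆ [m] with ‖x_{J\{j*}}‖_2 ≤ |x_{j*}|/√5 and x_{j*} ≠ 0. Let γ > 1, δ₁ ∈ (0,1), and k = ⌈36 log((1 + (2/5)γ²)/δ₁)⌉. Let A ∈ {±1}^{k×J} have i.i.d. uniform ±1 entries, s = sgn(Ax), and define S = {j ∈ J : d_H(a_j, s) ≤ k/6 or d_H(a_j, −s) ≤ k/6} where a_j is the j-th column of A. Then ℙ(j* ∈ S and ‖x_{S\{j*}}‖_2 ≤ |x_{j*}|/γ) ≥ 1 − δ₁. -/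
open Finset MeasureTheory

/-- Hamming distance on `{±1}^k`, `d_H(u,v) = (1/2)‖u - v‖₁`. -/
noncomputable def dHam {k : ℕ} (u v : Fin k → ℝ) : ℝ := (1 / 2) * ∑ i, |u i - v i|

namespace Stmt10Aux

lemma pm_not (b : Bool) : pm (!b) = -pm b := by cases b <;> simp [pm]
lemma pm_cases (b : Bool) : pm b = 1 ∨ pm b = -1 := by cases b <;> simp [pm]
lemma pm_sq (b : Bool) : pm b * pm b = 1 := by cases b <;> norm_num [pm]
lemma sgn_cases (t : ℝ) : sgn t = 1 ∨ sgn t = -1 := by unfold sgn; split <;> simp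
lemma sgn_ne_one_iff {t : ℝ} : sgn t ≠ 1 ↔ t < 0 := by unfold sgn; split <;> norm_num <;> linarith
lemma sgn_ne_neg_one_iff {t : ℝ} : sgn t ≠ -1 ↔ 0 ≤ t := by
  unfold sgn; split <;> norm_num <;> linarith

/-- flip one coordinate of a row -/
def flip (a : Fin m) (r : Fin m → Bool) : Fin m → Bool := Function.update r a (!(r a))

lemma flip_involutive (a : Fin m) : Function.Involutive (flip a) := by
  intro r
  funext j
  by_cases h : j = a
  · subst h; simp [flip]
  · simp [flip, Function.update_of_ne h]

lemma flip_apply_same (a : Fin m) (r : Fin m → Bool) : flip a r a = !(r a) := by simp [flip]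

lemma flip_apply_ne (a : Fin m) (r : Fin m → Bool) {j : Fin m} (h : j ≠ a) :
    flip a r j = r j := by simp [flip, Function.update_of_ne h]

lemma sum_flip {M : Type*} [AddCommMonoid M] (a : Fin m) (f : (Fin m → Bool) → M) :
    ∑ r : Fin m → Bool, f (flip a r) = ∑ r : Fin m → Bool, f r :=
  Fintype.sum_bijective (flip a) (flip_involutive a).bijective _ _ (fun _ => rfl)

end Stmt10Aux

namespace Stmt10Aux

variable {m : ℕ}

lemma sq_moment (x : Fin m → ℝ) (s : Finset (Fin m)) :
    ∑ r : Fin m → Bool, (∑ j ∈ s, pm (r j) * x j) ^ 2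
      = 2 ^ m * ∑ j ∈ s, x j ^ 2 := by
  classical
  induction s using Finset.induction_on with
  | empty => simp
  | @insert a s ha ih =>
    have hT : ∀ r : Fin m → Bool,
        (∑ j ∈ s, pm (flip a r j) * x j) = ∑ j ∈ s, pm (r j) * x j := by
      intro r
      refine Finset.sum_congr rfl fun j hj => ?_
      rw [flip_apply_ne a r (fun h => ha (h ▸ hj))]
    have hsplit : ∀ r : Fin m → Bool,
        (∑ j ∈ insert a s, pm (r j) * x j) = pm (r a) * x a + ∑ j ∈ s, pm (r j) * x j :=
      fun r => Finset.sum_insert ha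
    have key : (2 : ℝ) * ∑ r : Fin m → Bool, (∑ j ∈ insert a s, pm (r j) * x j) ^ 2
        = ∑ r : Fin m → Bool, (2 * (∑ j ∈ s, pm (r j) * x j) ^ 2 + 2 * x a ^ 2) := by
      have h1 := sum_flip (m := m) a
        (fun r => (∑ j ∈ insert a s, pm (r j) * x j) ^ 2)
      rw [two_mul]
      nth_rewrite 1 [← h1]
      rw [← Finset.sum_add_distrib]
      refine Finset.sum_congr rfl fun r _ => ?_
      rw [hsplit, hsplit, hT, flip_apply_same, pm_not]
      have h2 : pm (r a) * pm (r a) = 1 := pm_sq _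
      set u := pm (r a)
      set v := ∑ j ∈ s, pm (r j) * x j
      nlinarith [h2]
    have : (2:ℝ) * ∑ r : Fin m → Bool, (∑ j ∈ insert a s, pm (r j) * x j) ^ 2
        = 2 * (2 ^ m * ∑ j ∈ s, x j ^ 2) + 2 ^ m * (2 * x a ^ 2) := by
      rw [key, Finset.sum_add_distrib, ← Finset.mul_sum, ih, Finset.sum_const]
      simp [Fintype.card_fun]
    rw [Finset.sum_insert ha]
    linarith

lemma quad_moment (x : Fin m → ℝ) (s : Finset (Fin m)) :
    ∑ r : Fin m → Bool, (∑ j ∈ s, pm (r j) * x j) ^ 4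
      ≤ 3 * 2 ^ m * (∑ j ∈ s, x j ^ 2) ^ 2 := by
  classical
  induction s using Finset.induction_on with
  | empty => simp
  | @insert a s ha ih =>
    have hT : ∀ r : Fin m → Bool,
        (∑ j ∈ s, pm (flip a r j) * x j) = ∑ j ∈ s, pm (r j) * x j := by
      intro r
      refine Finset.sum_congr rfl fun j hj => ?_
      rw [flip_apply_ne a r (fun h => ha (h ▸ hj))]
    have hsplit : ∀ r : Fin m → Bool,
        (∑ j ∈ insert a s, pm (r j) * x j) = pm (r a) * x a + ∑ j ∈ s, pm (r j) * x j :=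
      fun r => Finset.sum_insert ha
    have key : (2 : ℝ) * ∑ r : Fin m → Bool, (∑ j ∈ insert a s, pm (r j) * x j) ^ 4
        = ∑ r : Fin m → Bool, (2 * (∑ j ∈ s, pm (r j) * x j) ^ 4
            + 12 * (∑ j ∈ s, pm (r j) * x j) ^ 2 * x a ^ 2 + 2 * x a ^ 4) := by
      have h1 := sum_flip (m := m) a
        (fun r => (∑ j ∈ insert a s, pm (r j) * x j) ^ 4)
      rw [two_mul]
      nth_rewrite 1 [← h1]
      rw [← Finset.sum_add_distrib]
      refine Finset.sum_congr rfl fun r _ => ?_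
      rw [hsplit, hsplit, hT, flip_apply_same, pm_not]
      have h2 : pm (r a) * pm (r a) = 1 := pm_sq _
      set u := pm (r a)
      set v := ∑ j ∈ s, pm (r j) * x j
      linear_combination (12 * v ^ 2 * x a ^ 2 + 2 * x a ^ 4 * (u * u + 1)) * h2
    have hS : (0:ℝ) ≤ ∑ j ∈ s, x j ^ 2 := Finset.sum_nonneg fun j _ => sq_nonneg _
    have e2 : ∑ r : Fin m → Bool, (∑ j ∈ s, pm (r j) * x j) ^ 2
        = 2 ^ m * ∑ j ∈ s, x j ^ 2 := sq_moment x s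
    have hbound : (2:ℝ) * ∑ r : Fin m → Bool, (∑ j ∈ insert a s, pm (r j) * x j) ^ 4
        ≤ 2 * (3 * 2 ^ m * (∑ j ∈ s, x j ^ 2) ^ 2)
          + 12 * (2 ^ m * ∑ j ∈ s, x j ^ 2) * x a ^ 2 + 2 ^ m * (2 * x a ^ 4) := by
      rw [key, Finset.sum_add_distrib, Finset.sum_add_distrib, Finset.sum_const]
      have t1 : ∑ r : Fin m → Bool, 2 * (∑ j ∈ s, pm (r j) * x j) ^ 4
          ≤ 2 * (3 * 2 ^ m * (∑ j ∈ s, x j ^ 2) ^ 2) := by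
        rw [← Finset.mul_sum]; linarith [ih]
      have t2 : ∑ r : Fin m → Bool, 12 * (∑ j ∈ s, pm (r j) * x j) ^ 2 * x a ^ 2
          = 12 * (2 ^ m * ∑ j ∈ s, x j ^ 2) * x a ^ 2 := by
        calc ∑ r : Fin m → Bool, 12 * (∑ j ∈ s, pm (r j) * x j) ^ 2 * x a ^ 2
            = (∑ r : Fin m → Bool, 12 * (∑ j ∈ s, pm (r j) * x j) ^ 2) * x a ^ 2 := by
              rw [Finset.sum_mul]
          _ = 12 * (∑ r : Fin m → Bool, (∑ j ∈ s, pm (r j) * x j) ^ 2) * x a ^ 2 := by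
              rw [Finset.mul_sum]
          _ = 12 * (2 ^ m * ∑ j ∈ s, x j ^ 2) * x a ^ 2 := by rw [e2]
      rw [t2, Finset.card_univ, Fintype.card_fun, Fintype.card_bool, Fintype.card_fin,
        nsmul_eq_mul]
      push_cast
      linarith
    have hp : (0:ℝ) < 2 ^ m := by positivity
    rw [Finset.sum_insert ha]
    nlinarith [hbound, mul_nonneg hp.le (sq_nonneg (x a ^ 2)),
      mul_nonneg hp.le (mul_nonneg hS (sq_nonneg (x a)))]

end Stmt10Aux

namespace Stmt10Aux

open Classical in
/-- A row is bad if the sign of the measurement differs from `sgn(x j*) ⋅ (row bit at j*)`. -/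
noncomputable def badRow (J : Finset (Fin m)) (jstar : Fin m) (x : Fin m → ℝ)
    (r : Fin m → Bool) : Prop :=
  sgn (∑ j ∈ J, pm (r j) * x j) ≠ sgn (x jstar) * pm (r jstar)

open Classical in
lemma badRow_count (J : Finset (Fin m)) (jstar : Fin m) (x : Fin m → ℝ)
    (hj : jstar ∈ J) (hxj : x jstar ≠ 0)
    (hT : ∑ j ∈ J.erase jstar, x j ^ 2 ≤ |x jstar| ^ 2 / 5) :
    2 * (((univ : Finset (Fin m → Bool)).filter (badRow J jstar x)).card : ℝ)
      ≤ 3 / 25 * 2 ^ m := by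
  set t := |x jstar| with htdef
  have ht : 0 < t := abs_pos.mpr hxj
  set sg := sgn (x jstar) with hsgdef
  set T : (Fin m → Bool) → ℝ := fun r => ∑ j ∈ J.erase jstar, pm (r j) * x j with hTdef
  have hsplit : ∀ r : Fin m → Bool, ∑ j ∈ J, pm (r j) * x j = pm (r jstar) * x jstar + T r :=
    fun r => (Finset.add_sum_erase J _ hj).symm
  have hxs : x jstar = sg * t := by
    rw [hsgdef, htdef]
    unfold sgn
    split
    · rw [abs_of_neg (by assumption)]; ring
    · rw [abs_of_nonneg (not_lt.mp (by assumption))]; ring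
  have hTflip : ∀ r, T (flip jstar r) = T r := by
    intro r
    refine Finset.sum_congr rfl fun j hj' => ?_
    rw [flip_apply_ne jstar r (Finset.ne_of_mem_erase hj')]
  have heps : ∀ r : Fin m → Bool,
      pm (r jstar) * sg = 1 ∨ pm (r jstar) * sg = -1 := by
    intro r
    rcases pm_cases (r jstar) with h | h <;> rcases sgn_cases (x jstar) with h' | h' <;>
      rw [h, ← hsgdef] at * <;> rw [h'] <;> norm_num
  have key : ∀ r : Fin m → Bool, badRow J jstar x r →
      (pm (r jstar) * sg = 1 ∧ T r < -t) ∨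
      (pm (r jstar) * sg = -1 ∧ t ≤ T r) := by
    intro r hbad
    unfold badRow at hbad
    rw [hsplit r, ← hsgdef] at hbad
    have hx2 : pm (r jstar) * x jstar = pm (r jstar) * sg * t := by rw [hxs]; ring
    rcases heps r with h | h
    · left
      refine ⟨h, ?_⟩
      rw [hx2, h, one_mul] at hbad
      have hsp : sg * pm (r jstar) = 1 := by rw [mul_comm]; exact h
      rw [hsp] at hbad
      have := sgn_ne_one_iff.mp hbad
      linarith
    · right
      refine ⟨h, ?_⟩
      rw [hx2, h] at hbad
      have hsp : sg * pm (r jstar) = -1 := by rw [mul_comm]; exact h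
      rw [hsp] at hbad
      have := sgn_ne_neg_one_iff.mp hbad
      linarith
  -- counting
  set A1 : Finset (Fin m → Bool) :=
    univ.filter (fun r => pm (r jstar) * sg = 1 ∧ T r < -t) with hA1
  set A2 : Finset (Fin m → Bool) :=
    univ.filter (fun r => pm (r jstar) * sg = -1 ∧ t ≤ T r) with hA2
  set A1' : Finset (Fin m → Bool) :=
    univ.filter (fun r => pm (r jstar) * sg = -1 ∧ T r < -t) with hA1'
  set A3 : Finset (Fin m → Bool) :=
    univ.filter (fun r => pm (r jstar) * sg = -1 ∧ t ^ 4 ≤ T r ^ 4) with hA3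
  have hflipmem : ∀ r : Fin m → Bool, pm (flip jstar r jstar) = - pm (r jstar) := by
    intro r; rw [flip_apply_same, pm_not]
  have hsub : univ.filter (badRow J jstar x) ⊆ A1 ∪ A2 := by
    intro r hr
    rw [Finset.mem_filter] at hr
    rcases key r hr.2 with h | h
    · exact Finset.mem_union_left _ (Finset.mem_filter.mpr ⟨Finset.mem_univ _, h⟩)
    · exact Finset.mem_union_right _ (Finset.mem_filter.mpr ⟨Finset.mem_univ _, h⟩)
  have hcard1 : A1.card = A1'.card := by
    refine Finset.card_nbij' (fun r => flip jstar r) (fun r => flip jstar r) ?_ ?_ ?_ ?_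
    · intro r hr
      rw [hA1, Finset.mem_coe, Finset.mem_filter] at hr
      rw [hA1', Finset.mem_coe, Finset.mem_filter]
      refine ⟨Finset.mem_univ _, ?_, ?_⟩
      · rw [hflipmem]; linarith [hr.2.1]
      · rw [hTflip]; exact hr.2.2
    · intro r hr
      rw [hA1', Finset.mem_coe, Finset.mem_filter] at hr
      rw [hA1, Finset.mem_coe, Finset.mem_filter]
      refine ⟨Finset.mem_univ _, ?_, ?_⟩
      · rw [hflipmem]; linarith [hr.2.1]
      · rw [hTflip]; exact hr.2.2
    · intro r _; exact flip_involutive jstar r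
    · intro r _; exact flip_involutive jstar r
  have hdisj : Disjoint A1' A2 := by
    rw [Finset.disjoint_left]
    intro r h1 h2
    rw [hA1', Finset.mem_filter] at h1
    rw [hA2, Finset.mem_filter] at h2
    linarith [h1.2.2, h2.2.2]
  have hsub3 : A1' ∪ A2 ⊆ A3 := by
    intro r hr
    rw [Finset.mem_union] at hr
    rw [hA3, Finset.mem_filter]
    refine ⟨Finset.mem_univ _, ?_⟩
    rcases hr with h | h
    · rw [hA1', Finset.mem_filter] at h
      refine ⟨h.2.1, ?_⟩
      have habs : t ≤ |T r| := by
        rw [abs_of_neg (by linarith [h.2.2])]; linarith [h.2.2]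
      calc t ^ 4 ≤ |T r| ^ 4 := by
            exact pow_le_pow_left₀ ht.le habs 4
        _ = T r ^ 4 := by
            rw [← abs_pow]
            exact abs_of_nonneg (by positivity)
    · rw [hA2, Finset.mem_filter] at h
      refine ⟨h.2.1, ?_⟩
      have habs : t ≤ |T r| := le_trans h.2.2 (le_abs_self _)
      calc t ^ 4 ≤ |T r| ^ 4 := pow_le_pow_left₀ ht.le habs 4
        _ = T r ^ 4 := by rw [← abs_pow]; exact abs_of_nonneg (by positivity)
  -- ∑ over A3 of T^4 dominates card A3 * t^4
  have hA3bound : (A3.card : ℝ) * t ^ 4 ≤ ∑ r ∈ A3, T r ^ 4 := by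
    rw [Finset.card_eq_sum_ones, Nat.cast_sum]
    rw [Finset.sum_mul]
    refine Finset.sum_le_sum fun r hr => ?_
    rw [hA3, Finset.mem_filter] at hr
    rw [Nat.cast_one, one_mul]
    exact hr.2.2
  -- half-space symmetry
  have hhalf : 2 * ∑ r ∈ univ.filter (fun r => pm (r jstar) * sg = -1), T r ^ 4
      ≤ ∑ r : Fin m → Bool, T r ^ 4 := by
    have hbij : ∑ r ∈ univ.filter (fun r => pm (r jstar) * sg = -1), T r ^ 4
        = ∑ r ∈ univ.filter (fun r => ¬ (pm (r jstar) * sg = -1)), T r ^ 4 := by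
      refine Finset.sum_nbij' (fun r => flip jstar r) (fun r => flip jstar r) ?_ ?_ ?_ ?_ ?_
      · intro r hr
        rw [Finset.mem_filter] at hr ⊢
        refine ⟨Finset.mem_univ _, ?_⟩
        rw [hflipmem]
        intro hcon
        linarith [hr.2]
      · intro r hr
        rw [Finset.mem_filter] at hr ⊢
        refine ⟨Finset.mem_univ _, ?_⟩
        rw [hflipmem]
        rcases heps r with h | h
        · linarith [h]
        · exact absurd h hr.2
      · intro r _; exact flip_involutive jstar r
      · intro r _; exact flip_involutive jstar r
      · intro r _; rw [hTflip]
    have hsplit2 := Finset.sum_filter_add_sum_filter_not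
      (univ : Finset (Fin m → Bool)) (fun r => pm (r jstar) * sg = -1) (fun r => T r ^ 4)
    linarith [hbij, hsplit2]
  have hA3sub : A3 ⊆ univ.filter (fun r => pm (r jstar) * sg = -1) := by
    intro r hr
    rw [hA3, Finset.mem_filter] at hr
    exact Finset.mem_filter.mpr ⟨Finset.mem_univ _, hr.2.1⟩
  have hsum3 : ∑ r ∈ A3, T r ^ 4 ≤ ∑ r ∈ univ.filter (fun r => pm (r jstar) * sg = -1), T r ^ 4 :=
    Finset.sum_le_sum_of_subset_of_nonneg hA3sub (fun r _ _ => by positivity)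
  have hquad : ∑ r : Fin m → Bool, T r ^ 4 ≤ 3 * 2 ^ m * (∑ j ∈ J.erase jstar, x j ^ 2) ^ 2 :=
    quad_moment x (J.erase jstar)
  have hSnn : (0:ℝ) ≤ ∑ j ∈ J.erase jstar, x j ^ 2 :=
    Finset.sum_nonneg fun j _ => sq_nonneg _
  have hS2 : (∑ j ∈ J.erase jstar, x j ^ 2) ^ 2 ≤ t ^ 4 / 25 := by
    have := mul_self_le_mul_self hSnn hT
    calc (∑ j ∈ J.erase jstar, x j ^ 2) ^ 2 ≤ (t ^ 2 / 5) ^ 2 := by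
          rw [sq, sq]; exact this
      _ = t ^ 4 / 25 := by ring
  -- assemble
  have hcards : ((univ.filter (badRow J jstar x)).card : ℝ) ≤ A3.card := by
    have h1 : (univ.filter (badRow J jstar x)).card ≤ A1.card + A2.card :=
      le_trans (Finset.card_le_card hsub) (Finset.card_union_le _ _)
    have h2 : A1'.card + A2.card = (A1' ∪ A2).card := (Finset.card_union_of_disjoint hdisj).symm
    have h3 : (A1' ∪ A2).card ≤ A3.card := Finset.card_le_card hsub3
    have : (univ.filter (badRow J jstar x)).card ≤ A3.card := by omega
    exact_mod_cast this
  have ht4 : (0:ℝ) < t ^ 4 := by positivity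
  have hfinal : 2 * ((univ.filter (badRow J jstar x)).card : ℝ) * t ^ 4 ≤ (3 / 25 * 2 ^ m) * t ^ 4 := by
    calc 2 * ((univ.filter (badRow J jstar x)).card : ℝ) * t ^ 4
        ≤ 2 * ((A3.card : ℝ) * t ^ 4) := by
          have := mul_le_mul_of_nonneg_right hcards ht4.le
          linarith
      _ ≤ 2 * ∑ r ∈ A3, T r ^ 4 := by linarith [hA3bound]
      _ ≤ 2 * ∑ r ∈ univ.filter (fun r => pm (r jstar) * sg = -1), T r ^ 4 := by
          linarith [hsum3]
      _ ≤ ∑ r : Fin m → Bool, T r ^ 4 := hhalf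
      _ ≤ 3 * 2 ^ m * (∑ j ∈ J.erase jstar, x j ^ 2) ^ 2 := hquad
      _ ≤ 3 * 2 ^ m * (t ^ 4 / 25) := by
          have h2m : (0:ℝ) ≤ 2 ^ m := by positivity
          nlinarith [hS2]
      _ = (3 / 25 * 2 ^ m) * t ^ 4 := by ring
  exact le_of_mul_le_mul_right (by linarith [hfinal]) ht4

end Stmt10Aux

namespace Stmt10Aux

open Classical in
lemma half_count (jstar j : Fin m) (hne : j ≠ jstar) (v : ℝ) :
    2 * (((univ : Finset (Fin m → Bool)).filter
        (fun r => pm (r j) = v * pm (r jstar))).card : ℝ) ≤ 2 ^ m := by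
  set A := (univ : Finset (Fin m → Bool)).filter (fun r => pm (r j) = v * pm (r jstar)) with hA
  set B := (univ : Finset (Fin m → Bool)).filter
    (fun r => ¬ (pm (r j) = v * pm (r jstar))) with hB
  have hinj : Set.InjOn (flip j) A := fun r _ r' _ h => by
    have := congrArg (flip j) h
    rwa [flip_involutive j r, flip_involutive j r'] at this
  have hmaps : ∀ r ∈ A, flip j r ∈ B := by
    intro r hr
    rw [hA, Finset.mem_filter] at hr
    rw [hB, Finset.mem_filter]
    refine ⟨Finset.mem_univ _, ?_⟩
    rw [flip_apply_same, pm_not, flip_apply_ne j r hne.symm] at *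
    intro hcon
    rw [hr.2] at hcon
    have h0 : pm (r j) ≠ 0 := by rcases pm_cases (r j) with h | h <;> rw [h] <;> norm_num
    rw [hr.2] at h0
    have : v * pm (r jstar) = 0 := by linarith
    exact h0 this
  have hcard : A.card ≤ B.card := Finset.card_le_card_of_injOn _ hmaps hinj
  have htot : A.card + B.card = 2 ^ m := by
    rw [hA, hB]
    rw [Finset.card_filter_add_card_filter_not]
    simp [Fintype.card_fun]
  have : 2 * A.card ≤ 2 ^ m := by omega
  calc 2 * (A.card : ℝ) ≤ ((2 * A.card : ℕ) : ℝ) := by push_cast; ring_nf; rfl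
    _ ≤ ((2 ^ m : ℕ) : ℝ) := by exact_mod_cast this
    _ = 2 ^ m := by push_cast; rfl

open Classical in
/-- Chernoff-type counting bound with base 2. -/
lemma chernoff_count (k : ℕ) (g : (Fin m → Bool) → ℕ) (a : ℝ) :
    (((univ : Finset (Fin k → Fin m → Bool)).filter
        (fun ω => a ≤ ∑ i, (g (ω i) : ℝ))).card : ℝ)
      ≤ (2 : ℝ) ^ (-a) * (∑ r : Fin m → Bool, (2 : ℝ) ^ (g r)) ^ k := by
  have hpoint : ∀ ω ∈ (univ : Finset (Fin k → Fin m → Bool)).filter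
      (fun ω => a ≤ ∑ i, (g (ω i) : ℝ)),
      (1 : ℝ) ≤ (2 : ℝ) ^ (-a) * ∏ i, (2 : ℝ) ^ (g (ω i)) := by
    intro ω hω
    rw [Finset.mem_filter] at hω
    have h1 : ∏ i, (2 : ℝ) ^ (g (ω i)) = (2 : ℝ) ^ (∑ i, g (ω i)) :=
      Finset.prod_pow_eq_pow_sum _ _ _
    rw [h1]
    have h2 : ((2 : ℝ) ^ (∑ i, g (ω i)) : ℝ) = (2 : ℝ) ^ ((∑ i, g (ω i) : ℕ) : ℝ) := by
      rw [Real.rpow_natCast]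
    rw [h2, ← Real.rpow_add (by norm_num : (0:ℝ) < 2)]
    have h3 : (0:ℝ) ≤ -a + ((∑ i, g (ω i) : ℕ) : ℝ) := by
      have : ((∑ i, g (ω i) : ℕ) : ℝ) = ∑ i, (g (ω i) : ℝ) := by push_cast; rfl
      rw [this]
      linarith [hω.2]
    calc (1:ℝ) = (2:ℝ) ^ (0:ℝ) := by rw [Real.rpow_zero]
      _ ≤ (2:ℝ) ^ (-a + ((∑ i, g (ω i) : ℕ) : ℝ)) :=
          Real.rpow_le_rpow_of_exponent_le (by norm_num) h3
  have hnonneg : ∀ ω : Fin k → Fin m → Bool,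
      (0:ℝ) ≤ (2 : ℝ) ^ (-a) * ∏ i, (2 : ℝ) ^ (g (ω i)) := by
    intro ω
    have : (0:ℝ) < (2:ℝ) ^ (-a) := Real.rpow_pos_of_pos (by norm_num) _
    positivity
  calc (((univ : Finset (Fin k → Fin m → Bool)).filter
        (fun ω => a ≤ ∑ i, (g (ω i) : ℝ))).card : ℝ)
      = ∑ ω ∈ (univ : Finset (Fin k → Fin m → Bool)).filter
          (fun ω => a ≤ ∑ i, (g (ω i) : ℝ)), (1:ℝ) := by
        rw [Finset.sum_const]; simp
    _ ≤ ∑ ω ∈ (univ : Finset (Fin k → Fin m → Bool)).filter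
          (fun ω => a ≤ ∑ i, (g (ω i) : ℝ)),
          (2 : ℝ) ^ (-a) * ∏ i, (2 : ℝ) ^ (g (ω i)) := Finset.sum_le_sum hpoint
    _ ≤ ∑ ω : Fin k → Fin m → Bool, (2 : ℝ) ^ (-a) * ∏ i, (2 : ℝ) ^ (g (ω i)) :=
        Finset.sum_le_sum_of_subset_of_nonneg (Finset.filter_subset _ _)
          (fun ω _ _ => hnonneg ω)
    _ = (2 : ℝ) ^ (-a) * ∑ ω : Fin k → Fin m → Bool, ∏ i, (2 : ℝ) ^ (g (ω i)) := by
        rw [Finset.mul_sum]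
    _ = (2 : ℝ) ^ (-a) * (∑ r : Fin m → Bool, (2 : ℝ) ^ (g r)) ^ k := by
        congr 1
        symm
        calc (∑ r : Fin m → Bool, (2:ℝ) ^ (g r)) ^ k
            = ∏ _i : Fin k, ∑ r : Fin m → Bool, (2:ℝ) ^ (g r) := by
              rw [Finset.prod_const, Finset.card_univ, Fintype.card_fin]
          _ = ∑ p ∈ Fintype.piFinset (fun _ : Fin k => (univ : Finset (Fin m → Bool))),
              ∏ i, (2:ℝ) ^ (g (p i)) :=
              Finset.prod_univ_sum (fun _ : Fin k => (univ : Finset (Fin m → Bool)))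
                (fun _ r => (2:ℝ) ^ (g r))
          _ = ∑ ω : Fin k → Fin m → Bool, ∏ i, (2:ℝ) ^ (g (ω i)) := by
              rw [Fintype.piFinset_univ]

end Stmt10Aux

namespace Stmt10Aux

lemma num1 : (53 / 50 : ℝ) * 2 ^ (-(1 : ℝ) / 6) ≤ Real.exp (-(1 / 36)) := by
  have hb : (0:ℝ) ≤ (53/50:ℝ) * 2 ^ (-(1:ℝ)/6) := by positivity
  refine (pow_le_pow_iff_left₀ hb (Real.exp_pos _).le (by norm_num : (36:ℕ) ≠ 0)).mp ?_
  have h36 : ((53/50:ℝ) * 2 ^ (-(1:ℝ)/6)) ^ (36:ℕ) = (53/50 : ℝ) ^ (36:ℕ) * (1/64) := by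
    rw [mul_pow]
    congr 1
    rw [← Real.rpow_natCast ((2:ℝ) ^ (-(1:ℝ)/6)) 36, ← Real.rpow_mul (by norm_num : (0:ℝ) ≤ 2)]
    rw [show (-(1:ℝ)/6 * (36:ℕ) : ℝ) = ((-6:ℤ):ℝ) by push_cast; ring]
    rw [Real.rpow_intCast]
    norm_num
  have hexp : Real.exp (-(1/36)) ^ (36:ℕ) = Real.exp (-1) := by
    rw [← Real.exp_nat_mul]; norm_num
  rw [h36, hexp, Real.exp_neg, inv_eq_one_div, le_div_iff₀ (Real.exp_pos 1)]
  nlinarith [Real.exp_one_lt_d9, Real.exp_pos 1]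

lemma num2 : (81 / 50 : ℝ) * 2 ^ (-(5 : ℝ) / 6) ≤ Real.exp (-(1 / 36)) := by
  have hb : (0:ℝ) ≤ (81/50:ℝ) * 2 ^ (-(5:ℝ)/6) := by positivity
  refine (pow_le_pow_iff_left₀ hb (Real.exp_pos _).le (by norm_num : (36:ℕ) ≠ 0)).mp ?_
  have h36 : ((81/50:ℝ) * 2 ^ (-(5:ℝ)/6)) ^ (36:ℕ)
      = (81/50 : ℝ) ^ (36:ℕ) * (1/1073741824) := by
    rw [mul_pow]
    congr 1
    rw [← Real.rpow_natCast ((2:ℝ) ^ (-(5:ℝ)/6)) 36, ← Real.rpow_mul (by norm_num : (0:ℝ) ≤ 2)]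
    rw [show (-(5:ℝ)/6 * (36:ℕ) : ℝ) = ((-30:ℤ):ℝ) by push_cast; ring]
    rw [Real.rpow_intCast]
    norm_num
  have hexp : Real.exp (-(1/36)) ^ (36:ℕ) = Real.exp (-1) := by
    rw [← Real.exp_nat_mul]; norm_num
  rw [h36, hexp, Real.exp_neg, inv_eq_one_div, le_div_iff₀ (Real.exp_pos 1)]
  nlinarith [Real.exp_one_lt_d9, Real.exp_pos 1]

end Stmt10Aux

namespace Stmt10Aux

open Classical in
noncomputable def gA (J : Finset (Fin m)) (jstar : Fin m) (x : Fin m → ℝ)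
    (r : Fin m → Bool) : ℕ :=
  if badRow J jstar x r then 1 else 0

open Classical in
noncomputable def gS (J : Finset (Fin m)) (jstar : Fin m) (x : Fin m → ℝ) (j : Fin m) (σ : ℝ)
    (r : Fin m → Bool) : ℕ :=
  (if pm (r j) = σ * sgn (x jstar) * pm (r jstar) then 1 else 0)
    + (if badRow J jstar x r then 1 else 0)

open Classical in
lemma rowsum_gA (J : Finset (Fin m)) (jstar : Fin m) (x : Fin m → ℝ)
    (hj : jstar ∈ J) (hxj : x jstar ≠ 0)
    (hT : ∑ j ∈ J.erase jstar, x j ^ 2 ≤ |x jstar| ^ 2 / 5) :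
    ∑ r : Fin m → Bool, (2:ℝ) ^ (gA J jstar x r) ≤ 53 / 50 * 2 ^ m := by
  have hpt : ∀ r : Fin m → Bool,
      (2:ℝ) ^ (gA J jstar x r) = 1 + (if badRow J jstar x r then (1:ℝ) else 0) := by
    intro r
    unfold gA
    split <;> norm_num
  rw [Finset.sum_congr rfl fun r _ => hpt r, Finset.sum_add_distrib, Finset.sum_const]
  rw [Finset.sum_boole]
  have hcard := badRow_count J jstar x hj hxj hT
  have hcu : ((univ : Finset (Fin m → Bool)).card : ℝ) = 2 ^ m := by
    simp [Fintype.card_fun]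
  rw [nsmul_eq_mul, mul_one, hcu]
  linarith [hcard]

open Classical in
lemma rowsum_gS (J : Finset (Fin m)) (jstar : Fin m) (x : Fin m → ℝ) (j : Fin m) (σ : ℝ)
    (hj : jstar ∈ J) (hxj : x jstar ≠ 0) (hne : j ≠ jstar)
    (hT : ∑ j ∈ J.erase jstar, x j ^ 2 ≤ |x jstar| ^ 2 / 5) :
    ∑ r : Fin m → Bool, (2:ℝ) ^ (gS J jstar x j σ r) ≤ 81 / 50 * 2 ^ m := by
  have hpt : ∀ r : Fin m → Bool,
      (2:ℝ) ^ (gS J jstar x j σ r)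
        ≤ (1 + (if pm (r j) = σ * sgn (x jstar) * pm (r jstar) then (1:ℝ) else 0))
          + 2 * (if badRow J jstar x r then (1:ℝ) else 0) := by
    intro r
    unfold gS
    split <;> split <;> norm_num
  calc ∑ r : Fin m → Bool, (2:ℝ) ^ (gS J jstar x j σ r)
      ≤ ∑ r : Fin m → Bool,
          ((1 + (if pm (r j) = σ * sgn (x jstar) * pm (r jstar) then (1:ℝ) else 0))
            + 2 * (if badRow J jstar x r then (1:ℝ) else 0)) :=
        Finset.sum_le_sum fun r _ => hpt r
    _ ≤ 81 / 50 * 2 ^ m := by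
        rw [Finset.sum_add_distrib, Finset.sum_add_distrib, Finset.sum_const]
        rw [Finset.sum_boole, ← Finset.mul_sum, Finset.sum_boole]
        have h1 := half_count jstar j hne (σ * sgn (x jstar))
        have h2 := badRow_count J jstar x hj hxj hT
        have hcu : ((univ : Finset (Fin m → Bool)).card : ℝ) = 2 ^ m := by
          simp [Fintype.card_fun]
        rw [nsmul_eq_mul, mul_one, hcu]
        linarith [h1, h2]

end Stmt10Aux

namespace Stmt10Aux

lemma abs_pm_le (b : Bool) : |pm b| ≤ 1 := by rcases pm_cases b with h | h <;> rw [h] <;> norm_num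
lemma abs_sgn_le (t : ℝ) : |sgn t| ≤ 1 := by rcases sgn_cases t with h | h <;> rw [h] <;> norm_num

open Classical in
lemma claimA {k : ℕ} (J : Finset (Fin m)) (jstar : Fin m) (x : Fin m → ℝ)
    (ω : Fin k → Fin m → Bool)
    (hlt : (∑ i, (gA J jstar x (ω i) : ℝ)) < (k:ℝ) / 6) :
    dHam (fun i => pm (ω i jstar)) (fun i => sgn (∑ j ∈ J, pm (ω i j) * x j)) ≤ (k:ℝ) / 6 ∨
    dHam (fun i => pm (ω i jstar)) (fun i => -(sgn (∑ j ∈ J, pm (ω i j) * x j))) ≤ (k:ℝ) / 6 := by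
  have hgood : ∀ i, ¬ badRow J jstar x (ω i) →
      sgn (∑ j ∈ J, pm (ω i j) * x j) = sgn (x jstar) * pm (ω i jstar) := by
    intro i h
    unfold badRow at h
    exact not_not.mp h
  rcases sgn_cases (x jstar) with hsg | hsg
  · left
    unfold dHam
    rw [Finset.mul_sum]
    calc ∑ i, (1/2 : ℝ) * |pm (ω i jstar) - sgn (∑ j ∈ J, pm (ω i j) * x j)|
        ≤ ∑ i, (gA J jstar x (ω i) : ℝ) := by
          refine Finset.sum_le_sum fun i _ => ?_
          by_cases hb : badRow J jstar x (ω i)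
          · have h1 : |pm (ω i jstar) - sgn (∑ j ∈ J, pm (ω i j) * x j)| ≤ 2 := by
              calc |pm (ω i jstar) - sgn (∑ j ∈ J, pm (ω i j) * x j)|
                  ≤ |pm (ω i jstar)| + |sgn (∑ j ∈ J, pm (ω i j) * x j)| := abs_sub _ _
                _ ≤ 2 := by linarith [abs_pm_le (ω i jstar), abs_sgn_le (∑ j ∈ J, pm (ω i j) * x j)]
            have : gA J jstar x (ω i) = 1 := by unfold gA; rw [if_pos hb]
            rw [this]
            push_cast
            linarith
          · rw [hgood i hb, hsg, one_mul, sub_self, abs_zero]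
            simp only [mul_zero]
            positivity
      _ ≤ (k:ℝ) / 6 := hlt.le
  · right
    unfold dHam
    rw [Finset.mul_sum]
    calc ∑ i, (1/2 : ℝ) * |pm (ω i jstar) - -(sgn (∑ j ∈ J, pm (ω i j) * x j))|
        ≤ ∑ i, (gA J jstar x (ω i) : ℝ) := by
          refine Finset.sum_le_sum fun i _ => ?_
          by_cases hb : badRow J jstar x (ω i)
          · have h1 : |pm (ω i jstar) - -(sgn (∑ j ∈ J, pm (ω i j) * x j))| ≤ 2 := by
              calc |pm (ω i jstar) - -(sgn (∑ j ∈ J, pm (ω i j) * x j))|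
                  ≤ |pm (ω i jstar)| + |-(sgn (∑ j ∈ J, pm (ω i j) * x j))| := abs_sub _ _
                _ ≤ 2 := by
                    rw [abs_neg]
                    linarith [abs_pm_le (ω i jstar), abs_sgn_le (∑ j ∈ J, pm (ω i j) * x j)]
            have : gA J jstar x (ω i) = 1 := by unfold gA; rw [if_pos hb]
            rw [this]
            push_cast
            linarith
          · rw [hgood i hb, hsg]
            have : pm (ω i jstar) - -(-1 * pm (ω i jstar)) = 0 := by ring
            rw [this, abs_zero]
            simp only [mul_zero]
            positivity
      _ ≤ (k:ℝ) / 6 := hlt.le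

open Classical in
lemma claimB {k : ℕ} (J : Finset (Fin m)) (jstar : Fin m) (x : Fin m → ℝ)
    (ω : Fin k → Fin m → Bool) (j : Fin m) (σ : ℝ) (hσ : σ = 1 ∨ σ = -1)
    (hd : dHam (fun i => pm (ω i j))
        (fun i => σ * sgn (∑ j ∈ J, pm (ω i j) * x j)) ≤ (k:ℝ) / 6) :
    5 * (k:ℝ) / 6 ≤ ∑ i, (gS J jstar x j σ (ω i) : ℝ) := by
  have hgood : ∀ i, ¬ badRow J jstar x (ω i) →
      sgn (∑ j ∈ J, pm (ω i j) * x j) = sgn (x jstar) * pm (ω i jstar) := by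
    intro i h
    unfold badRow at h
    exact not_not.mp h
  have hpt : ∀ i : Fin k,
      1 - (1/2 : ℝ) * |pm (ω i j) - σ * sgn (∑ j' ∈ J, pm (ω i j') * x j')|
        ≤ (gS J jstar x j σ (ω i) : ℝ) := by
    intro i
    by_cases heq : pm (ω i j) = σ * sgn (∑ j' ∈ J, pm (ω i j') * x j')
    · rw [heq, sub_self, abs_zero]
      have h1 : 1 ≤ gS J jstar x j σ (ω i) := by
        unfold gS
        by_cases hb : badRow J jstar x (ω i)
        · rw [if_pos hb]; omega
        · have : pm (ω i j) = σ * sgn (x jstar) * pm (ω i jstar) := by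
            rw [heq, hgood i hb]; ring
          rw [if_pos this]; omega
      have h2 : (1:ℝ) ≤ (gS J jstar x j σ (ω i) : ℝ) := by exact_mod_cast h1
      linarith
    · have habs : |pm (ω i j) - σ * sgn (∑ j' ∈ J, pm (ω i j') * x j')| = 2 := by
        rcases pm_cases (ω i j) with h1 | h1 <;>
          rcases sgn_cases (∑ j' ∈ J, pm (ω i j') * x j') with h2 | h2 <;>
          rcases hσ with h3 | h3 <;>
          rw [h1, h2, h3] at heq ⊢ <;> revert heq <;> norm_num
      rw [habs]
      norm_num
  have hsum : ∑ i, (1 - (1/2 : ℝ) * |pm (ω i j) - σ * sgn (∑ j' ∈ J, pm (ω i j') * x j')|)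
      ≤ ∑ i, (gS J jstar x j σ (ω i) : ℝ) := Finset.sum_le_sum fun i _ => hpt i
  have hexp : ∑ i, (1 - (1/2 : ℝ) * |pm (ω i j) - σ * sgn (∑ j' ∈ J, pm (ω i j') * x j')|)
      = (k:ℝ) - dHam (fun i => pm (ω i j))
          (fun i => σ * sgn (∑ j' ∈ J, pm (ω i j') * x j')) := by
    unfold dHam
    rw [Finset.sum_sub_distrib, Finset.sum_const, Finset.mul_sum]
    simp [nsmul_eq_mul]
  rw [hexp] at hsum
  linarith [hd, hsum]

end Stmt10Aux

namespace Stmt10Aux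

open scoped ENNReal in
lemma pmf_uniform_bound {α : Type*} [Fintype α] [Nonempty α] [MeasurableSpace α]
    [MeasurableSingletonClass α] (E : Set α) (B : Finset α) (hmeas : MeasurableSet E)
    (hsub : ∀ a, a ∉ B → a ∈ E) (δ : ℝ) (hδ : 0 ≤ δ)
    (hcard : (B.card : ℝ) ≤ δ * Fintype.card α) :
    (PMF.uniformOfFintype α).toMeasure E ≥ ENNReal.ofReal (1 - δ) := by
  set μ := (PMF.uniformOfFintype α).toMeasure with hμ
  have h1 : μ Eᶜ ≤ μ ↑B := by
    refine measure_mono ?_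
    intro a ha
    by_contra hna
    exact ha (hsub a hna)
  have h2 : μ ↑B = (B.card : ℝ≥0∞) * (Fintype.card α : ℝ≥0∞)⁻¹ := by
    rw [hμ, PMF.toMeasure_apply_finset]
    have : ∀ a ∈ B, PMF.uniformOfFintype α a = (Fintype.card α : ℝ≥0∞)⁻¹ := fun a _ =>
      PMF.uniformOfFintype_apply a
    rw [Finset.sum_congr rfl this, Finset.sum_const, nsmul_eq_mul]
  have hcard0 : (Fintype.card α : ℝ≥0∞) ≠ 0 := by
    simp [Fintype.card_ne_zero]
  have hcardtop : (Fintype.card α : ℝ≥0∞) ≠ ⊤ := ENNReal.natCast_ne_top _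
  have h3 : (B.card : ℝ≥0∞) * (Fintype.card α : ℝ≥0∞)⁻¹ ≤ ENNReal.ofReal δ := by
    have hb : (B.card : ℝ≥0∞) ≤ ENNReal.ofReal δ * (Fintype.card α : ℝ≥0∞) := by
      calc (B.card : ℝ≥0∞) = ENNReal.ofReal (B.card : ℝ) := by
            rw [ENNReal.ofReal_natCast]
        _ ≤ ENNReal.ofReal (δ * Fintype.card α) := ENNReal.ofReal_le_ofReal hcard
        _ = ENNReal.ofReal δ * ENNReal.ofReal (Fintype.card α : ℝ) := ENNReal.ofReal_mul hδ
        _ = ENNReal.ofReal δ * (Fintype.card α : ℝ≥0∞) := by rw [ENNReal.ofReal_natCast]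
    calc (B.card : ℝ≥0∞) * (Fintype.card α : ℝ≥0∞)⁻¹
        ≤ ENNReal.ofReal δ * (Fintype.card α : ℝ≥0∞) * (Fintype.card α : ℝ≥0∞)⁻¹ :=
          mul_le_mul_left hb _
      _ = ENNReal.ofReal δ * ((Fintype.card α : ℝ≥0∞) * (Fintype.card α : ℝ≥0∞)⁻¹) := by
          rw [mul_assoc]
      _ = ENNReal.ofReal δ := by rw [ENNReal.mul_inv_cancel hcard0 hcardtop, mul_one]
  have hEc : μ Eᶜ ≤ ENNReal.ofReal δ := le_trans h1 (le_of_eq_of_le h2 h3)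
  have hprob : IsProbabilityMeasure μ := PMF.toMeasure.isProbabilityMeasure _
  have hE : μ E = 1 - μ Eᶜ := by
    have := prob_compl_eq_one_sub (μ := μ) hmeas.compl
    rw [compl_compl] at this
    rw [this]
  rw [hE]
  calc ENNReal.ofReal (1 - δ) = ENNReal.ofReal 1 - ENNReal.ofReal δ :=
        ENNReal.ofReal_sub 1 hδ
    _ = 1 - ENNReal.ofReal δ := by rw [ENNReal.ofReal_one]
    _ ≤ 1 - μ Eᶜ := tsub_le_tsub_left hEc 1
end Stmt10Aux

namespace Stmt10Aux

open Classical in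
lemma chern_eps {m : ℕ} (k : ℕ) (g : (Fin m → Bool) → ℕ) (c a e : ℝ)
    (hrow : ∑ r : Fin m → Bool, (2:ℝ) ^ (g r) ≤ c * 2 ^ m) (hc : 0 ≤ c) (he : 0 ≤ e)
    (hbase : c * (2:ℝ) ^ (-a) ≤ e)
    (E : Finset (Fin k → Fin m → Bool)) (hE : ∀ ω ∈ E, a * k ≤ ∑ i, (g (ω i) : ℝ)) :
    (E.card : ℝ) ≤ e ^ k * ((2:ℝ) ^ m) ^ k := by
  have hsub : E ⊆ (univ : Finset (Fin k → Fin m → Bool)).filter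
      (fun ω => a * k ≤ ∑ i, (g (ω i) : ℝ)) := fun ω hω =>
    Finset.mem_filter.mpr ⟨Finset.mem_univ _, hE ω hω⟩
  have hrow0 : (0:ℝ) ≤ ∑ r : Fin m → Bool, (2:ℝ) ^ (g r) :=
    Finset.sum_nonneg fun r _ => by positivity
  have hrpow0 : (0:ℝ) ≤ (2:ℝ) ^ (-(a * (k:ℝ))) := (Real.rpow_pos_of_pos two_pos _).le
  calc (E.card : ℝ) ≤ (((univ : Finset (Fin k → Fin m → Bool)).filter
        (fun ω => a * k ≤ ∑ i, (g (ω i) : ℝ))).card : ℝ) := by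
        exact_mod_cast Finset.card_le_card hsub
    _ ≤ (2:ℝ) ^ (-(a * (k:ℝ))) * (∑ r : Fin m → Bool, (2:ℝ) ^ (g r)) ^ k :=
        chernoff_count k g (a * k)
    _ ≤ (2:ℝ) ^ (-(a * (k:ℝ))) * (c * 2 ^ m) ^ k := by
        refine mul_le_mul_of_nonneg_left ?_ hrpow0
        exact pow_le_pow_left₀ hrow0 hrow k
    _ = (c * (2:ℝ) ^ (-a)) ^ k * ((2:ℝ) ^ m) ^ k := by
        rw [mul_pow, mul_pow]
        have h2 : ((2:ℝ) ^ (-a)) ^ k = (2:ℝ) ^ (-(a * (k:ℝ))) := by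
          rw [← Real.rpow_natCast ((2:ℝ) ^ (-a)) k,
            ← Real.rpow_mul (by norm_num : (0:ℝ) ≤ 2)]
          congr 1
          ring
        rw [h2]
        ring
    _ ≤ e ^ k * ((2:ℝ) ^ m) ^ k := by
        refine mul_le_mul_of_nonneg_right ?_ (by positivity)
        exact pow_le_pow_left₀ (by positivity) hbase k

lemma pmf_uniform_bound_top {α : Type*} [Fintype α] [Nonempty α] (E : Set α) (B : Finset α)
    (hsub : ∀ a, a ∉ B → a ∈ E) (δ : ℝ) (hδ : 0 ≤ δ)
    (hcard : (B.card : ℝ) ≤ δ * Fintype.card α) :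
    (@PMF.toMeasure α ⊤ (PMF.uniformOfFintype α)) E ≥ ENNReal.ofReal (1 - δ) :=
  @pmf_uniform_bound α _ _ ⊤
    (@MeasurableSingletonClass.mk α ⊤ (fun _ => MeasurableSpace.measurableSet_top)) E B
    MeasurableSpace.measurableSet_top hsub δ hδ hcard

end Stmt10Aux

set_option maxHeartbeats 2000000 in
open Stmt10Aux in
/-- **Preconditioning.** Under the heavy-hitter condition `‖x_{J\{j*}}‖₂ ≤ |x_{j*}|/√5`,
with `k = ⌈36 log((1 + (2/5)γ²)/δ₁)⌉` i.i.d. uniform `±1` Rademacher measurement rows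
(modelled by a uniformly random sign matrix `ω : Fin k → Fin m → Bool`),
sign vector `s = sgn(Ax)` and
`S = {j ∈ J : d_H(a_j, s) ≤ k/6 ∨ d_H(a_j, -s) ≤ k/6}`, we have
`ℙ(j* ∈ S ∧ ‖x_{S\{j*}}‖₂ ≤ |x_{j*}|/γ) ≥ 1 - δ₁`. -/
theorem stmt10 {m : ℕ} (J : Finset (Fin m)) (jstar : Fin m) (hj : jstar ∈ J)
    (x : Fin m → ℝ) (hxj : x jstar ≠ 0)
    (hHH : (∑ j ∈ J.erase jstar, |x j| ^ 2) ^ ((1 : ℝ) / 2) ≤ |x jstar| / Real.sqrt 5)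
    (γ δ₁ : ℝ) (hγ : 1 < γ) (hδ₁ : δ₁ ∈ Set.Ioo (0 : ℝ) 1)
    (k : ℕ) (hk : k = ⌈36 * Real.log ((1 + (2 / 5) * γ ^ 2) / δ₁)⌉₊) :
    (@PMF.toMeasure (Fin k → Fin m → Bool) ⊤ (PMF.uniformOfFintype _))
        {ω | ∀ s : Fin k → ℝ, s = (fun i => sgn (∑ j ∈ J, pm (ω i j) * x j)) →
          ∀ S : Finset (Fin m),
            S = J.filter (fun j => dHam (fun i => pm (ω i j)) s ≤ (k : ℝ) / 6 ∨
                  dHam (fun i => pm (ω i j)) (fun i => -(s i)) ≤ (k : ℝ) / 6) →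
            jstar ∈ S ∧
              (∑ j ∈ S.erase jstar, |x j| ^ 2) ^ ((1 : ℝ) / 2) ≤ |x jstar| / γ}
      ≥ ENNReal.ofReal (1 - δ₁) := by
  classical
  obtain ⟨hδ0, hδ11⟩ := hδ₁
  have hγ0 : (0:ℝ) < γ := lt_trans one_pos hγ
  set t := |x jstar| with htdef
  have ht : 0 < t := abs_pos.mpr hxj
  have hsqs : ∀ s : Finset (Fin m), ∑ j ∈ s, |x j| ^ 2 = ∑ j ∈ s, x j ^ 2 := fun s =>
    Finset.sum_congr rfl fun j _ => sq_abs _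
  -- heavy hitter in squared form
  have hHH2 : ∑ j ∈ J.erase jstar, x j ^ 2 ≤ t ^ 2 / 5 := by
    rw [hsqs] at hHH
    have h0 : (0:ℝ) ≤ ∑ j ∈ J.erase jstar, x j ^ 2 :=
      Finset.sum_nonneg fun j _ => sq_nonneg _
    have h1 : Real.sqrt (∑ j ∈ J.erase jstar, x j ^ 2) ≤ t / Real.sqrt 5 := by
      rw [Real.sqrt_eq_rpow]
      exact hHH
    have h2 := Real.sq_sqrt h0
    have h3 : (t / Real.sqrt 5) ^ 2 = t ^ 2 / 5 := by
      rw [div_pow, Real.sq_sqrt (by norm_num : (0:ℝ) ≤ 5)]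
    nlinarith [Real.sqrt_nonneg (∑ j ∈ J.erase jstar, x j ^ 2),
      Real.sqrt_nonneg (5:ℝ), h1, h2, h3, ht,
      Real.sqrt_pos.mpr (show (0:ℝ) < 5 by norm_num)]
  -- epsilon bookkeeping
  set A := 1 + 2 / 5 * γ ^ 2 with hAdef
  have hApos : (0:ℝ) < A := by positivity
  set ε := δ₁ / A with hεdef
  have hεpos : 0 < ε := div_pos hδ0 hApos
  have hεA : ε * A = δ₁ := div_mul_cancel₀ δ₁ (ne_of_gt hApos)
  have hkk : 36 * Real.log (A / δ₁) ≤ (k:ℝ) := by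
    rw [hk]
    exact Nat.le_ceil _
  have hexpk : Real.exp (-(k:ℝ)/36) ≤ ε := by
    have hAδ : ε⁻¹ = A / δ₁ := by rw [hεdef, inv_div]
    have hlog : Real.log (A / δ₁) = - Real.log ε := by rw [← hAδ, Real.log_inv]
    have h4 : -(k:ℝ)/36 ≤ Real.log ε := by
      rw [hlog] at hkk
      linarith
    calc Real.exp (-(k:ℝ)/36) ≤ Real.exp (Real.log ε) := Real.exp_le_exp.mpr h4
      _ = ε := Real.exp_log hεpos
  have hExpPow : (Real.exp (-(1/36))) ^ k ≤ ε := by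
    rw [← Real.exp_nat_mul]
    have : ((k:ℕ):ℝ) * (-(1/36)) = -(k:ℝ)/36 := by push_cast; ring
    rw [this]
    exact hexpk
  -- the selected set as a function of ω
  set SSet : (Fin k → Fin m → Bool) → Finset (Fin m) := fun ω =>
    J.filter (fun j =>
      dHam (fun i => pm (ω i j)) (fun i => sgn (∑ j' ∈ J, pm (ω i j') * x j')) ≤ (k : ℝ) / 6 ∨
      dHam (fun i => pm (ω i j))
        (fun i => -(sgn (∑ j' ∈ J, pm (ω i j') * x j'))) ≤ (k : ℝ) / 6) with hSSet
  set Q : (Fin k → Fin m → Bool) → Prop := fun ω =>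
    jstar ∈ SSet ω ∧ ∑ j ∈ (SSet ω).erase jstar, x j ^ 2 ≤ t ^ 2 / γ ^ 2 with hQ
  set Bfin := (univ : Finset (Fin k → Fin m → Bool)).filter (fun ω => ¬ Q ω) with hBfin
  -- counting : card of bad events
  have hcardEa : (((univ : Finset (Fin k → Fin m → Bool)).filter
      (fun ω => (1/6:ℝ) * k ≤ ∑ i, (gA J jstar x (ω i) : ℝ))).card : ℝ)
      ≤ ε * ((2:ℝ) ^ m) ^ k := by
    have h := chern_eps k (gA J jstar x) (53/50) (1/6) (Real.exp (-(1/36)))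
      (rowsum_gA J jstar x hj hxj hHH2) (by norm_num) (Real.exp_pos _).le
      (by
        have he : (-(1/6) : ℝ) = -(1:ℝ)/6 := by norm_num
        rw [he]
        exact num1)
      ((univ : Finset (Fin k → Fin m → Bool)).filter
        (fun ω => (1/6:ℝ) * k ≤ ∑ i, (gA J jstar x (ω i) : ℝ)))
      (fun ω hω => (Finset.mem_filter.mp hω).2)
    calc (((univ : Finset (Fin k → Fin m → Bool)).filter
        (fun ω => (1/6:ℝ) * k ≤ ∑ i, (gA J jstar x (ω i) : ℝ))).card : ℝ)
        ≤ (Real.exp (-(1/36))) ^ k * ((2:ℝ) ^ m) ^ k := h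
      _ ≤ ε * ((2:ℝ) ^ m) ^ k := mul_le_mul_of_nonneg_right hExpPow (by positivity)
  have hcardF : ∀ j, j ≠ jstar → ∀ σ : ℝ,
      (((univ : Finset (Fin k → Fin m → Bool)).filter
        (fun ω => (5/6:ℝ) * k ≤ ∑ i, (gS J jstar x j σ (ω i) : ℝ))).card : ℝ)
      ≤ ε * ((2:ℝ) ^ m) ^ k := by
    intro j hne σ
    have h := chern_eps k (gS J jstar x j σ) (81/50) (5/6) (Real.exp (-(1/36)))
      (rowsum_gS J jstar x j σ hj hxj hne hHH2) (by norm_num) (Real.exp_pos _).le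
      (by
        have he : (-(5/6) : ℝ) = -(5:ℝ)/6 := by norm_num
        rw [he]
        exact num2)
      ((univ : Finset (Fin k → Fin m → Bool)).filter
        (fun ω => (5/6:ℝ) * k ≤ ∑ i, (gS J jstar x j σ (ω i) : ℝ)))
      (fun ω hω => (Finset.mem_filter.mp hω).2)
    calc (((univ : Finset (Fin k → Fin m → Bool)).filter
        (fun ω => (5/6:ℝ) * k ≤ ∑ i, (gS J jstar x j σ (ω i) : ℝ))).card : ℝ)
        ≤ (Real.exp (-(1/36))) ^ k * ((2:ℝ) ^ m) ^ k := h
      _ ≤ ε * ((2:ℝ) ^ m) ^ k := mul_le_mul_of_nonneg_right hExpPow (by positivity)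
  -- membership in S forces large g-sums
  have hmemS : ∀ (ω : Fin k → Fin m → Bool) (j : Fin m), j ∈ J → j ≠ jstar → j ∈ SSet ω →
      ((5/6:ℝ) * k ≤ ∑ i, (gS J jstar x j 1 (ω i) : ℝ)) ∨
      ((5/6:ℝ) * k ≤ ∑ i, (gS J jstar x j (-1) (ω i) : ℝ)) := by
    intro ω j hjJ hne hmem
    rw [hSSet, Finset.mem_filter] at hmem
    rcases hmem.2 with hd | hd
    · left
      have hfun : (fun i => (1:ℝ) * sgn (∑ j' ∈ J, pm (ω i j') * x j'))
          = (fun i => sgn (∑ j' ∈ J, pm (ω i j') * x j')) := by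
        funext i; rw [one_mul]
      have := claimB J jstar x ω j 1 (Or.inl rfl) (by rw [hfun]; exact hd)
      linarith
    · right
      have hfun : (fun i => (-1:ℝ) * sgn (∑ j' ∈ J, pm (ω i j') * x j'))
          = (fun i => -(sgn (∑ j' ∈ J, pm (ω i j') * x j'))) := by
        funext i; rw [neg_one_mul]
      have := claimB J jstar x ω j (-1) (Or.inr rfl) (by rw [hfun]; exact hd)
      linarith
  -- per-j bound on P(j ∈ S)
  have hjS : ∀ j, j ∈ J → j ≠ jstar →
      (((univ : Finset (Fin k → Fin m → Bool)).filter (fun ω => j ∈ SSet ω)).card : ℝ)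
        ≤ 2 * ε * ((2:ℝ) ^ m) ^ k := by
    intro j hjJ hne
    have hsub : (univ : Finset (Fin k → Fin m → Bool)).filter (fun ω => j ∈ SSet ω)
        ⊆ ((univ : Finset (Fin k → Fin m → Bool)).filter
            (fun ω => (5/6:ℝ) * k ≤ ∑ i, (gS J jstar x j 1 (ω i) : ℝ)))
          ∪ ((univ : Finset (Fin k → Fin m → Bool)).filter
            (fun ω => (5/6:ℝ) * k ≤ ∑ i, (gS J jstar x j (-1) (ω i) : ℝ))) := by
      intro ω hω
      rcases hmemS ω j hjJ hne (Finset.mem_filter.mp hω).2 with h | h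
      · exact Finset.mem_union_left _ (Finset.mem_filter.mpr ⟨Finset.mem_univ _, h⟩)
      · exact Finset.mem_union_right _ (Finset.mem_filter.mpr ⟨Finset.mem_univ _, h⟩)
    have h1 := hcardF j hne 1
    have h2 := hcardF j hne (-1)
    have hcard := Finset.card_le_card hsub
    have hcardu := Finset.card_union_le
      ((univ : Finset (Fin k → Fin m → Bool)).filter
        (fun ω => (5/6:ℝ) * k ≤ ∑ i, (gS J jstar x j 1 (ω i) : ℝ)))
      ((univ : Finset (Fin k → Fin m → Bool)).filter
        (fun ω => (5/6:ℝ) * k ≤ ∑ i, (gS J jstar x j (-1) (ω i) : ℝ)))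
    have : (((univ : Finset (Fin k → Fin m → Bool)).filter
        (fun ω => j ∈ SSet ω)).card : ℝ)
        ≤ (((univ : Finset (Fin k → Fin m → Bool)).filter
            (fun ω => (5/6:ℝ) * k ≤ ∑ i, (gS J jstar x j 1 (ω i) : ℝ))).card : ℝ)
          + (((univ : Finset (Fin k → Fin m → Bool)).filter
            (fun ω => (5/6:ℝ) * k ≤ ∑ i, (gS J jstar x j (-1) (ω i) : ℝ))).card : ℝ) := by
      exact_mod_cast le_trans hcard hcardu
    linarith
    -- rewriting the tail sum through indicators
  have hSsub : ∀ ω : Fin k → Fin m → Bool, SSet ω ⊆ J := by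
    intro ω
    rw [hSSet]
    exact Finset.filter_subset _ _
  have hrewr : ∀ ω : Fin k → Fin m → Bool, ∑ j ∈ (SSet ω).erase jstar, x j ^ 2
      = ∑ j ∈ J.erase jstar, (if j ∈ SSet ω then x j ^ 2 else 0) := by
    intro ω
    rw [← Finset.sum_filter]
    congr 1
    ext j
    simp only [Finset.mem_erase, Finset.mem_filter]
    constructor
    · intro h
      exact ⟨⟨h.1, hSsub ω h.2⟩, h.2⟩
    · intro h
      exact ⟨h.1.1, h.2⟩
  -- bound for the Markov part
  have hEbcard : (((univ : Finset (Fin k → Fin m → Bool)).filter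
      (fun ω => t ^ 2 / γ ^ 2 < ∑ j ∈ (SSet ω).erase jstar, x j ^ 2)).card : ℝ)
      ≤ 2 / 5 * γ ^ 2 * ε * ((2:ℝ) ^ m) ^ k := by
    set Eb := (univ : Finset (Fin k → Fin m → Bool)).filter
      (fun ω => t ^ 2 / γ ^ 2 < ∑ j ∈ (SSet ω).erase jstar, x j ^ 2) with hEbdef
    have hpt : ∀ ω ∈ Eb, (1:ℝ) ≤ γ ^ 2 / t ^ 2 * ∑ j ∈ (SSet ω).erase jstar, x j ^ 2 := by
      intro ω hω
      have hgt := (Finset.mem_filter.mp hω).2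
      have hpos : (0:ℝ) < γ ^ 2 / t ^ 2 := by positivity
      have h1 : γ ^ 2 / t ^ 2 * (t ^ 2 / γ ^ 2) = 1 := by field_simp
      nlinarith [mul_lt_mul_of_pos_left hgt hpos]
    have h2 : ((Eb).card : ℝ) ≤ ∑ ω ∈ Eb, γ ^ 2 / t ^ 2 * ∑ j ∈ (SSet ω).erase jstar, x j ^ 2 := by
      calc ((Eb).card : ℝ) = ∑ _ω ∈ Eb, (1:ℝ) := by rw [Finset.sum_const, nsmul_eq_mul, mul_one]
        _ ≤ _ := Finset.sum_le_sum hpt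
    have h3 : ∑ ω ∈ Eb, γ ^ 2 / t ^ 2 * ∑ j ∈ (SSet ω).erase jstar, x j ^ 2
        ≤ ∑ ω : Fin k → Fin m → Bool, γ ^ 2 / t ^ 2 * ∑ j ∈ (SSet ω).erase jstar, x j ^ 2 := by
      refine Finset.sum_le_sum_of_subset_of_nonneg (Finset.filter_subset _ _) ?_
      intro ω _ _
      have h0 : (0:ℝ) ≤ ∑ j ∈ (SSet ω).erase jstar, x j ^ 2 :=
        Finset.sum_nonneg fun j _ => sq_nonneg _
      positivity
    have h4 : ∑ ω : Fin k → Fin m → Bool, (∑ j ∈ (SSet ω).erase jstar, x j ^ 2)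
        ≤ (t ^ 2 / 5) * (2 * ε * ((2:ℝ) ^ m) ^ k) := by
      calc ∑ ω : Fin k → Fin m → Bool, (∑ j ∈ (SSet ω).erase jstar, x j ^ 2)
          = ∑ ω : Fin k → Fin m → Bool,
              ∑ j ∈ J.erase jstar, (if j ∈ SSet ω then x j ^ 2 else 0) :=
            Finset.sum_congr rfl fun ω _ => hrewr ω
        _ = ∑ j ∈ J.erase jstar,
              ∑ ω : Fin k → Fin m → Bool, (if j ∈ SSet ω then x j ^ 2 else 0) :=
            Finset.sum_comm
        _ = ∑ j ∈ J.erase jstar,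
              ((((univ : Finset (Fin k → Fin m → Bool)).filter
                (fun ω => j ∈ SSet ω)).card : ℝ) * x j ^ 2) := by
            refine Finset.sum_congr rfl fun j _ => ?_
            rw [← Finset.sum_filter, Finset.sum_const, nsmul_eq_mul]
        _ ≤ ∑ j ∈ J.erase jstar, (2 * ε * ((2:ℝ) ^ m) ^ k) * x j ^ 2 := by
            refine Finset.sum_le_sum fun j hj' => ?_
            have := hjS j (Finset.mem_of_mem_erase hj') (Finset.ne_of_mem_erase hj')
            exact mul_le_mul_of_nonneg_right this (sq_nonneg _)
        _ = (2 * ε * ((2:ℝ) ^ m) ^ k) * ∑ j ∈ J.erase jstar, x j ^ 2 := by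
            rw [← Finset.mul_sum]
        _ ≤ (2 * ε * ((2:ℝ) ^ m) ^ k) * (t ^ 2 / 5) :=
            mul_le_mul_of_nonneg_left hHH2 (by positivity)
        _ = (t ^ 2 / 5) * (2 * ε * ((2:ℝ) ^ m) ^ k) := by ring
    have h5 : ∑ ω : Fin k → Fin m → Bool, γ ^ 2 / t ^ 2 * ∑ j ∈ (SSet ω).erase jstar, x j ^ 2
        = γ ^ 2 / t ^ 2 * ∑ ω : Fin k → Fin m → Bool, ∑ j ∈ (SSet ω).erase jstar, x j ^ 2 := by
      rw [Finset.mul_sum]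
    have h6 : γ ^ 2 / t ^ 2 * ((t ^ 2 / 5) * (2 * ε * ((2:ℝ) ^ m) ^ k))
        = 2 / 5 * γ ^ 2 * ε * ((2:ℝ) ^ m) ^ k := by
      field_simp
    have hc : (0:ℝ) ≤ γ ^ 2 / t ^ 2 := by positivity
    have h7 := mul_le_mul_of_nonneg_left h4 hc
    rw [h5] at h3
    linarith [h2, h3, h7]
  -- the bad set is contained in the two bad events
  have hsubBad : Bfin ⊆ ((univ : Finset (Fin k → Fin m → Bool)).filter
        (fun ω => (1/6:ℝ) * k ≤ ∑ i, (gA J jstar x (ω i) : ℝ)))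
      ∪ ((univ : Finset (Fin k → Fin m → Bool)).filter
        (fun ω => t ^ 2 / γ ^ 2 < ∑ j ∈ (SSet ω).erase jstar, x j ^ 2)) := by
    intro ω hω
    rw [hBfin, Finset.mem_filter] at hω
    by_contra hn
    rw [Finset.mem_union] at hn
    push_neg at hn
    obtain ⟨hnA, hnB⟩ := hn
    apply hω.2
    constructor
    · have hlt : ∑ i, (gA J jstar x (ω i) : ℝ) < (k:ℝ) / 6 := by
        by_contra hge
        push_neg at hge
        exact hnA (Finset.mem_filter.mpr ⟨Finset.mem_univ _, by linarith⟩)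
      have hca := claimA J jstar x ω hlt
      rw [hSSet]
      exact Finset.mem_filter.mpr ⟨hj, hca⟩
    · by_contra hgt
      push_neg at hgt
      exact hnB (Finset.mem_filter.mpr ⟨Finset.mem_univ _, hgt⟩)
  -- total count
  have hcount : (Bfin.card : ℝ) ≤ δ₁ * (Fintype.card (Fin k → Fin m → Bool) : ℝ) := by
    have hcardΩ : ((Fintype.card (Fin k → Fin m → Bool) : ℕ) : ℝ) = ((2:ℝ) ^ m) ^ k := by
      have hcf : Fintype.card (Fin k → Fin m → Bool) = (2 ^ m) ^ k := by
        simp [Fintype.card_fun]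
      rw [hcf]
      push_cast
      ring
    have h8 : (Bfin.card : ℝ)
        ≤ ((((univ : Finset (Fin k → Fin m → Bool)).filter
            (fun ω => (1/6:ℝ) * k ≤ ∑ i, (gA J jstar x (ω i) : ℝ))).card : ℝ)
          + ((((univ : Finset (Fin k → Fin m → Bool)).filter
            (fun ω => t ^ 2 / γ ^ 2 < ∑ j ∈ (SSet ω).erase jstar, x j ^ 2)).card : ℝ))) := by
      have := le_trans (Finset.card_le_card hsubBad) (Finset.card_union_le _ _)
      exact_mod_cast this
    have h9 : ε * ((2:ℝ) ^ m) ^ k + 2 / 5 * γ ^ 2 * ε * ((2:ℝ) ^ m) ^ k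
        = δ₁ * ((2:ℝ) ^ m) ^ k := by
      have h10 : ε * ((2:ℝ) ^ m) ^ k + 2 / 5 * γ ^ 2 * ε * ((2:ℝ) ^ m) ^ k
          = (ε * A) * ((2:ℝ) ^ m) ^ k := by
        rw [hAdef]
        ring
      rw [h10, hεA]
    rw [hcardΩ]
    linarith [hcardEa, hEbcard, h8]
  -- conclude via the uniform-measure bound
  refine pmf_uniform_bound_top _ Bfin ?_ δ₁ hδ0.le hcount
  intro ω hω
  have hQω : Q ω := by
    by_contra hq
    exact hω (Finset.mem_filter.mpr ⟨Finset.mem_univ _, hq⟩)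
  intro s hs S hS
  subst hs
  have hSeq : S = SSet ω := by
    rw [hS, hSSet]
  constructor
  · rw [hSeq]
    exact hQω.1
  · rw [hSeq, hsqs]
    have h0 : (0:ℝ) ≤ ∑ j ∈ (SSet ω).erase jstar, x j ^ 2 :=
      Finset.sum_nonneg fun j _ => sq_nonneg _
    rw [← Real.sqrt_eq_rpow]
    calc Real.sqrt (∑ j ∈ (SSet ω).erase jstar, x j ^ 2)
        ≤ Real.sqrt (t ^ 2 / γ ^ 2) := Real.sqrt_le_sqrt hQω.2
      _ = t / γ := by
          rw [show t ^ 2 / γ ^ 2 = (t / γ) ^ 2 by ring, Real.sqrt_sq (by positivity)]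
end

section
/- Let 1 ≤ p ≤ 2 and p < q < ∞, L ∈ ℕ, and suppose a random set K ⊆ [m] and a vector x ∈ ℝ^m with ‖x‖_p ≤ 1 satisfy: for every 1 ≤ l ≤ L and every j with 2^{−l/p} < |x_j|, ℙ(j ∉ K) ≤ 2^{−(L−l+1)R} where R = ⌈q/p⌉. Let z be the vector with z_j = x_j for j ∈ K and z_j = 0 otherwise. Then E‖x − z‖_q^q ≤ 3 · 2^{−L(q−p)/p}. -/
/-!
Writing `χ_j = 1_{j ∉ K}`, the error is `∑_j |x_j|^q χ_j`, so its expectation is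
`∑_j |x_j|^q ℙ(j ∉ K)`. Each term is at most `|x_j|^p 2^{-L(q-p)/p}`: on the tail
`|x_j| ≤ 2^{-L/p}` this is interpolation `|x_j|^q ≤ |x_j|^p |x_j|^{q-p}`, and on the level
`2^{-l/p} < |x_j| ≤ 2^{-(l-1)/p}` the missing decay `2^{-(L-l+1)(q-p)/p}` is supplied by
`ℙ(j ∉ K) ≤ 2^{-(L-l+1)R}`, since `R ≥ q/p ≥ (q-p)/p`. Summing and using `‖x‖_p ≤ 1` gives
even the bound `2^{-L(q-p)/p}`.
-/

open Finset MeasureTheory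

theorem exists_level_of_lt_of_le {α : Type*} [LinearOrder α] {a : ℕ → α} {s : α} :
    ∀ {L : ℕ}, a L < s → s ≤ a 0 → ∃ l, 1 ≤ l ∧ l ≤ L ∧ a l < s ∧ s ≤ a (l - 1)
  | 0, hL, h0 => absurd h0 (not_le.mpr hL)
  | L + 1, hL, h0 => by
    by_cases hprev : a L < s
    · obtain ⟨l, hl1, hlL, hl⟩ := exists_level_of_lt_of_le hprev h0
      exact ⟨l, hl1, by omega, hl⟩
    · exact ⟨L + 1, by omega, le_rfl, hL, not_lt.mp hprev⟩

theorem Real.rpow_le_rpow_mul_rpow_sub {s b p q : ℝ} (hs : 0 ≤ s) (hsb : s ≤ b) (hpq : p ≤ q)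
    (hq : q ≠ 0) : s ^ q ≤ s ^ p * b ^ (q - p) := by
  calc s ^ q = s ^ p * s ^ (q - p) := by
        rw [← Real.rpow_add' hs (by simpa using hq)]; ring_nf
    _ ≤ s ^ p * b ^ (q - p) := by
        gcongr

theorem two_rpow_level_mul_le {p q : ℝ} {l L : ℕ} {R : ℕ} (hp : 0 < p) (hRq : q ≤ R * p)
    (hlL : l ≤ L) :
    ((2 : ℝ) ^ (-((l : ℝ) - 1) / p)) ^ (q - p) * (2 : ℝ) ^ (-((L : ℝ) - l + 1) * R)
      ≤ (2 : ℝ) ^ (-(L : ℝ) * (q - p) / p) := by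
  rw [← Real.rpow_mul zero_le_two, ← Real.rpow_add zero_lt_two]
  apply Real.rpow_le_rpow_of_exponent_le one_le_two
  have hR : (q - p) / p ≤ R := by rw [div_le_iff₀ hp]; linarith
  have hlL' : (l : ℝ) ≤ L := by exact_mod_cast hlL
  have key : -((l : ℝ) - 1) / p * (q - p) = -((l : ℝ) - 1) * ((q - p) / p) := by ring
  rw [key, show -(L : ℝ) * (q - p) / p = -L * ((q - p) / p) by ring]
  nlinarith

theorem ofReal_rpow_mul_le_of_level_bound {p q : ℝ} {L R : ℕ} (hp : 0 < p) (hpq : p < q)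
    (hRq : q ≤ R * p) {s : ℝ} (hs0 : 0 ≤ s) (hs1 : s ≤ 1) {ν : ENNReal} (hν1 : ν ≤ 1)
    (h : ∀ l : ℕ, 1 ≤ l → l ≤ L → (2 : ℝ) ^ (-(l : ℝ) / p) < s →
      ν ≤ ENNReal.ofReal ((2 : ℝ) ^ (-((L : ℝ) - l + 1) * (R : ℝ)))) :
    ENNReal.ofReal (s ^ q) * ν ≤ ENNReal.ofReal (s ^ p * (2 : ℝ) ^ (-(L : ℝ) * (q - p) / p)) := by
  have hq : q ≠ 0 := by linarith
  by_cases htail : s ≤ (2 : ℝ) ^ (-(L : ℝ) / p)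
  · calc ENNReal.ofReal (s ^ q) * ν ≤ ENNReal.ofReal (s ^ q) := mul_le_of_le_one_right' hν1
      _ ≤ ENNReal.ofReal (s ^ p * (2 : ℝ) ^ (-(L : ℝ) * (q - p) / p)) := by
        refine ENNReal.ofReal_le_ofReal ?_
        calc s ^ q ≤ s ^ p * ((2 : ℝ) ^ (-(L : ℝ) / p)) ^ (q - p) :=
              Real.rpow_le_rpow_mul_rpow_sub hs0 htail hpq.le hq
          _ = s ^ p * (2 : ℝ) ^ (-(L : ℝ) * (q - p) / p) := by
              rw [← Real.rpow_mul zero_le_two]; ring_nf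
  obtain ⟨l, hl1, hlL, hlow, hhigh⟩ :=
    exists_level_of_lt_of_le (a := fun l : ℕ => (2 : ℝ) ^ (-(l : ℝ) / p)) (not_le.mp htail)
      (by simpa using hs1)
  have hhigh' : s ≤ (2 : ℝ) ^ (-((l : ℝ) - 1) / p) := by
    simpa [Nat.cast_sub hl1] using hhigh
  calc ENNReal.ofReal (s ^ q) * ν
      ≤ ENNReal.ofReal (s ^ p * ((2 : ℝ) ^ (-((l : ℝ) - 1) / p)) ^ (q - p)) *
          ENNReal.ofReal ((2 : ℝ) ^ (-((L : ℝ) - l + 1) * R)) :=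
        mul_le_mul' (ENNReal.ofReal_le_ofReal
          (Real.rpow_le_rpow_mul_rpow_sub hs0 hhigh' hpq.le hq)) (h l hl1 hlL hlow)
    _ = ENNReal.ofReal (s ^ p * (((2 : ℝ) ^ (-((l : ℝ) - 1) / p)) ^ (q - p) *
          (2 : ℝ) ^ (-((L : ℝ) - l + 1) * R))) := by
        rw [← ENNReal.ofReal_mul (by positivity), mul_assoc]
    _ ≤ ENNReal.ofReal (s ^ p * (2 : ℝ) ^ (-(L : ℝ) * (q - p) / p)) := by
        gcongr
        exact two_rpow_level_mul_le hp hRq hlL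

theorem lintegral_sum_indicator_notMem {Ω ι : Type*} [MeasurableSpace Ω] [Fintype ι]
    (μ : Measure Ω) (K : Ω → Finset ι) (hK : ∀ j, MeasurableSet {ω | j ∈ K ω})
    (c : ι → ENNReal) :
    ∫⁻ ω, ∑ j, {ω | j ∉ K ω}.indicator (fun _ => c j) ω ∂μ = ∑ j, c j * μ {ω | j ∉ K ω} := by
  have hKc : ∀ j, MeasurableSet {ω | j ∉ K ω} := fun j => (hK j).compl
  rw [lintegral_finsetSum _ fun j _ => measurable_const.indicator (hKc j)]
  exact Finset.sum_congr rfl fun j _ => lintegral_indicator_const (hKc j) _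

theorem sum_abs_rpow_le_one {ι : Type*} [Fintype ι] {p : ℝ} (hp : 0 < p) {x : ι → ℝ}
    (hx : (∑ i, |x i| ^ p) ^ (1 / p) ≤ 1) : ∑ i, |x i| ^ p ≤ 1 := by
  refine (Real.rpow_le_rpow_iff (by positivity) zero_le_one (by positivity : 0 < 1 / p)).mp ?_
  rwa [Real.one_rpow]

theorem abs_le_one_of_sum_abs_rpow_le_one {ι : Type*} [Fintype ι] {p : ℝ} (hp : 0 < p)
    {x : ι → ℝ} (hx : ∑ i, |x i| ^ p ≤ 1) (j : ι) : |x j| ≤ 1 := by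
  have hj : |x j| ^ p ≤ 1 ^ p :=
    (Real.one_rpow p).symm ▸ (Finset.single_le_sum (fun i _ => by positivity)
      (Finset.mem_univ j)).trans hx
  exact (Real.rpow_le_rpow_iff (abs_nonneg _) zero_le_one hp).mp hj

theorem stmt12_general {Ω : Type*} [MeasurableSpace Ω] (μ : Measure Ω) [IsProbabilityMeasure μ]
    {m : ℕ} (p q : ℝ) (hp1 : 1 ≤ p) (hpq : p < q)
    (L : ℕ) (R : ℕ) (hR : R = ⌈q / p⌉₊)
    (x : Fin m → ℝ) (hx : (∑ i, |x i| ^ p) ^ (1 / p) ≤ 1)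
    (K : Ω → Finset (Fin m))
    (hKmeas : ∀ j : Fin m, MeasurableSet {ω | j ∈ K ω})
    (hK : ∀ l : ℕ, 1 ≤ l → l ≤ L → ∀ j : Fin m,
      (2 : ℝ) ^ (-(l : ℝ) / p) < |x j| →
      μ {ω | j ∉ K ω} ≤ ENNReal.ofReal ((2 : ℝ) ^ (-((L : ℝ) - l + 1) * (R : ℝ)))) :
    ∫⁻ ω, ENNReal.ofReal
        (∑ j, |x j - (if j ∈ K ω then x j else 0)| ^ q) ∂μ
      ≤ ENNReal.ofReal (3 * (2 : ℝ) ^ (-(L : ℝ) * (q - p) / p)) := by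
  have hp : 0 < p := by linarith
  set c : ℝ := (2 : ℝ) ^ (-(L : ℝ) * (q - p) / p)
  have hRq : q ≤ R * p := by
    rw [hR, ← div_le_iff₀ hp]
    exact Nat.le_ceil _
  have hxp := sum_abs_rpow_le_one hp hx
  have herror : ∀ ω, ENNReal.ofReal (∑ j, |x j - (if j ∈ K ω then x j else 0)| ^ q)
      = ∑ j, {ω | j ∉ K ω}.indicator (fun _ => ENNReal.ofReal (|x j| ^ q)) ω := by
    intro ω
    rw [ENNReal.ofReal_sum_of_nonneg fun j _ => by positivity]
    refine Finset.sum_congr rfl fun j _ => ?_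
    by_cases hj : j ∈ K ω <;> simp [hj, Real.zero_rpow (by linarith : q ≠ 0)]
  calc _ = ∑ j, ENNReal.ofReal (|x j| ^ q) * μ {ω | j ∉ K ω} := by
        simp_rw [herror]
        exact lintegral_sum_indicator_notMem μ K hKmeas _
    _ ≤ ∑ j, ENNReal.ofReal (|x j| ^ p * c) := Finset.sum_le_sum fun j _ =>
        ofReal_rpow_mul_le_of_level_bound hp hpq hRq (abs_nonneg _)
          (abs_le_one_of_sum_abs_rpow_le_one hp hxp j) prob_le_one
          fun l hl1 hlL hlow => hK l hl1 hlL j hlow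
    _ = ENNReal.ofReal ((∑ j, |x j| ^ p) * c) := by
        rw [Finset.sum_mul, ENNReal.ofReal_sum_of_nonneg fun j _ => by positivity]
    _ ≤ ENNReal.ofReal (3 * c) := by
        gcongr
        linarith

/-- **Error of the multi-sensitivity recovery.** Let `1 ≤ p ≤ 2 < q < ∞` (more precisely
`1 ≤ p ≤ 2` and `p < q`), `‖x‖_p ≤ 1`, `R = ⌈q/p⌉`, and suppose the random coordinate set
`K` satisfies `ℙ(j ∉ K) ≤ 2^{-(L-l+1)R}` for every level `1 ≤ l ≤ L` and every `j` with
`2^{-l/p} < |x_j|`. Let `z` keep the coordinates of `x` on `K` and be zero elsewhere.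
Then `E‖x - z‖_q^q ≤ 3 · 2^{-L(q-p)/p}`. -/
theorem stmt12 {Ω : Type*} [MeasurableSpace Ω] (μ : Measure Ω) [IsProbabilityMeasure μ]
    {m : ℕ} (p q : ℝ) (hp1 : 1 ≤ p) (hp2 : p ≤ 2) (hpq : p < q)
    (L : ℕ) (R : ℕ) (hR : R = ⌈q / p⌉₊)
    (x : Fin m → ℝ) (hx : (∑ i, |x i| ^ p) ^ (1 / p) ≤ 1)
    (K : Ω → Finset (Fin m))
    (hKmeas : ∀ j : Fin m, MeasurableSet {ω | j ∈ K ω})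
    (hK : ∀ l : ℕ, 1 ≤ l → l ≤ L → ∀ j : Fin m,
      (2 : ℝ) ^ (-(l : ℝ) / p) < |x j| →
      μ {ω | j ∉ K ω} ≤ ENNReal.ofReal ((2 : ℝ) ^ (-((L : ℝ) - l + 1) * (R : ℝ)))) :
    ∫⁻ ω, ENNReal.ofReal
        (∑ j, |x j - (if j ∈ K ω then x j else 0)| ^ q) ∂μ
      ≤ ENNReal.ofReal (3 * (2 : ℝ) ^ (-(L : ℝ) * (q - p) / p)) :=
  stmt12_general μ p q hp1 hpq L R hR x hx K hKmeas hK
end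

section
/- Let X_1,...,X_R be i.i.d. real random variables with ℙ(|X_r − θ| > ε) ≤ α for some θ ∈ ℝ, ε > 0, and α ∈ (0, 1/4), with R odd. Let Z = median(X_1,...,X_R). Then ℙ(|Z − θ| > ε) ≤ (1/2)(4α)^{R/2}. -/
open Finset MeasureTheory ProbabilityTheory

/-- The median of `R` reals `v : Fin R → ℝ` (for odd `R`), defined as the smallest `t`
such that at least `(R+1)/2` of the values are `≤ t`; this is the `(R+1)/2`-th order
statistic. -/
noncomputable def medianFn {R : ℕ} (v : Fin R → ℝ) : ℝ :=
  sInf {t : ℝ | (R + 1) / 2 ≤ (Finset.univ.filter fun r => v r ≤ t).card}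

lemma median_dev_card {R : ℕ} (hR : Odd R) (v : Fin R → ℝ) {θ ε : ℝ} (hε : 0 < ε)
    (h : ε < |medianFn v - θ|) :
    (R + 1) / 2 ≤ (Finset.univ.filter fun r => ε < |v r - θ|).card := by
  by_contra hc
  push_neg at hc
  set k := (R + 1) / 2 with hk
  set D := Finset.univ.filter fun r => ε < |v r - θ| with hD
  set S := {t : ℝ | k ≤ (Finset.univ.filter fun r : Fin R => v r ≤ t).card} with hS
  obtain ⟨m, hm⟩ := hR
  have hkval : k = m + 1 := by omega
  -- the complement of D has ≥ k elements
  have hGcard : k ≤ (Finset.univ.filter fun r => ¬ ε < |v r - θ|).card := by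
    have hsplit : (Finset.univ.filter fun r : Fin R => ¬ ε < |v r - θ|) = Finset.univ \ D := by
      rw [hD, Finset.filter_not]
    rw [hsplit, Finset.card_sdiff_of_subset (Finset.subset_univ _), Finset.card_univ, Fintype.card_fin]
    have hDle : #D ≤ R := by
      simpa using Finset.card_le_card (Finset.subset_univ D)
    omega
  have hmemS : θ + ε ∈ S := by
    refine le_trans hGcard (Finset.card_le_card ?_)
    intro r hr
    simp only [Finset.mem_filter, Finset.mem_univ, true_and, not_lt] at hr ⊢
    have := abs_le.mp hr
    linarith [this.1, this.2]
  have hlb : ∀ t ∈ S, θ - ε ≤ t := by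
    intro t ht
    by_contra hlt
    push_neg at hlt
    have hsub : (Finset.univ.filter fun r : Fin R => v r ≤ t) ⊆ D := by
      intro r hr
      simp only [hD, Finset.mem_filter, Finset.mem_univ, true_and] at hr ⊢
      have : v r - θ < -ε := by linarith
      rw [abs_sub_comm]
      calc ε < θ - v r := by linarith
        _ ≤ |θ - v r| := le_abs_self _
    have := Finset.card_le_card hsub
    simp only [hS, Set.mem_setOf_eq] at ht
    omega
  have hbdd : BddBelow S := ⟨θ - ε, hlb⟩
  have hne : S.Nonempty := ⟨θ + ε, hmemS⟩
  have h1 : medianFn v ≤ θ + ε := csInf_le hbdd hmemS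
  have h2 : θ - ε ≤ medianFn v := le_csInf hne hlb
  have habs : |medianFn v - θ| ≤ ε := abs_le.mpr ⟨by linarith, by linarith⟩
  linarith


lemma key_real {R : ℕ} (hR : Odd R) {α : ℝ} (hα1 : 0 < α) (hα2 : α < 1 / 4) :
    (R.choose ((R + 1) / 2) : ℝ) * α ^ ((R + 1) / 2) ≤ (1 / 2) * (4 * α) ^ ((R : ℝ) / 2) := by
  obtain ⟨m, hm⟩ := hR
  have hkval : (R + 1) / 2 = m + 1 := by omega
  have hRm : R - (m + 1) = m := by omega
  -- binomial coefficient bound : 2 * choose ≤ 2 ^ R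
  have hchoose2 : 2 * R.choose (m + 1) ≤ 2 ^ R := by
    have hsym : R.choose (m + 1) = R.choose m := by
      have h := Nat.choose_symm (n := R) (k := m + 1) (by omega)
      rw [hRm] at h
      exact h.symm
    have hsum : ∑ i ∈ Finset.range (R + 1), R.choose i = 2 ^ R := Nat.sum_range_choose R
    have hsub : ({m, m + 1} : Finset ℕ) ⊆ Finset.range (R + 1) := by
      intro i hi
      simp only [Finset.mem_insert, Finset.mem_singleton] at hi
      rcases hi with rfl | rfl <;> simp [Finset.mem_range] <;> omega
    have := Finset.sum_le_sum_of_subset hsub (f := R.choose)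
    rw [Finset.sum_insert (by simp), Finset.sum_singleton, hsum] at this
    omega
  have hchooseR : (R.choose (m + 1) : ℝ) ≤ 2 ^ R / 2 := by
    have := (Nat.cast_le (α := ℝ)).mpr hchoose2
    push_cast at this
    linarith
  have h4 : (4 : ℝ) ^ ((R : ℝ) / 2) = 2 ^ R := by
    have h44 : (4 : ℝ) = (2 : ℝ) ^ (2 : ℕ) := by norm_num
    rw [h44, ← Real.rpow_natCast (2 : ℝ) 2, ← Real.rpow_mul (by norm_num : (0:ℝ) ≤ 2)]
    rw [show ((2 : ℕ) : ℝ) * ((R : ℝ) / 2) = (R : ℝ) by push_cast; ring, Real.rpow_natCast]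
  have hαle : α ^ (m + 1) ≤ α ^ ((R : ℝ) / 2) := by
    rw [← Real.rpow_natCast α (m + 1)]
    refine Real.rpow_le_rpow_of_exponent_ge hα1 (by linarith) ?_
    rw [hm]; push_cast; linarith
  have hrw : (1 / 2 : ℝ) * (4 * α) ^ ((R : ℝ) / 2) = (2 ^ R / 2) * α ^ ((R : ℝ) / 2) := by
    rw [Real.mul_rpow (by norm_num) hα1.le, h4]; ring
  rw [hkval, hrw]
  exact mul_le_mul hchooseR hαle (by positivity) (by positivity)

/-- **Median trick.** If `X_1, …, X_R` are i.i.d. with `ℙ(|X_r - θ| > ε) ≤ α` for some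
`α < 1/4`, and `R` is odd, then the median `Z` satisfies
`ℙ(|Z - θ| > ε) ≤ (1/2)(4α)^{R/2}`. -/
theorem stmt13 {Ω : Type*} [MeasurableSpace Ω] (μ : Measure Ω) [IsProbabilityMeasure μ]
    {R : ℕ} (hR : Odd R) (X : Fin R → Ω → ℝ)
    (hmeas : ∀ r, Measurable (X r))
    (hindep : iIndepFun X μ)
    (hident : ∀ r r', IdentDistrib (X r) (X r') μ μ)
    (θ ε α : ℝ) (hε : 0 < ε) (hα1 : 0 < α) (hα2 : α < 1 / 4)
    (hdev : ∀ r, μ {ω | ε < |X r ω - θ|} ≤ ENNReal.ofReal α) :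
    μ {ω | ε < |medianFn (fun r => X r ω) - θ|}
      ≤ ENNReal.ofReal ((1 / 2) * (4 * α) ^ ((R : ℝ) / 2)) := by
  classical
  set k := (R + 1) / 2 with hk
  set B : Set ℝ := {x | ε < |x - θ|} with hB
  have hBmeas : MeasurableSet B :=
    measurableSet_lt measurable_const ((measurable_id.sub measurable_const).abs)
  set A : Fin R → Set Ω := fun r => X r ⁻¹' B with hA
  have hAdev : ∀ r, μ (A r) ≤ ENNReal.ofReal α := fun r => hdev r
  have hsub : {ω | ε < |medianFn (fun r => X r ω) - θ|} ⊆
      ⋃ S ∈ Finset.univ.powersetCard k, ⋂ r ∈ S, A r := by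
    intro ω hω
    have hcard := median_dev_card hR (fun r => X r ω) hε hω
    obtain ⟨T, hTsub, hTcard⟩ := Finset.exists_subset_card_eq hcard
    refine Set.mem_iUnion₂.mpr ⟨T, Finset.mem_powersetCard.mpr ⟨Finset.subset_univ T, hTcard⟩, ?_⟩
    refine Set.mem_iInter₂.mpr fun r hr => ?_
    have := hTsub hr
    simp only [Finset.mem_filter, Finset.mem_univ, true_and] at this
    exact this
  calc μ {ω | ε < |medianFn (fun r => X r ω) - θ|}
      ≤ μ (⋃ S ∈ Finset.univ.powersetCard k, ⋂ r ∈ S, A r) := measure_mono hsub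
    _ ≤ ∑ S ∈ Finset.univ.powersetCard k, μ (⋂ r ∈ S, A r) :=
        measure_biUnion_finset_le _ _
    _ ≤ ∑ S ∈ Finset.univ.powersetCard k, (ENNReal.ofReal α) ^ k := by
        refine Finset.sum_le_sum fun S hS => ?_
        rw [hindep.meas_biInter (fun r _ => ⟨B, hBmeas, rfl⟩)]
        have hScard : S.card = k := (Finset.mem_powersetCard.mp hS).2
        calc ∏ r ∈ S, μ (A r) ≤ ∏ r ∈ S, ENNReal.ofReal α :=
              Finset.prod_le_prod' fun r _ => hAdev r
          _ = (ENNReal.ofReal α) ^ k := by rw [Finset.prod_const, hScard]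
    _ = (R.choose k : ENNReal) * (ENNReal.ofReal α) ^ k := by
        rw [Finset.sum_const, Finset.card_powersetCard, Finset.card_univ, Fintype.card_fin,
          nsmul_eq_mul]
    _ ≤ ENNReal.ofReal ((1 / 2) * (4 * α) ^ ((R : ℝ) / 2)) := by
        rw [← ENNReal.ofReal_pow hα1.le, ← ENNReal.ofReal_natCast,
          ← ENNReal.ofReal_mul (by positivity)]
        exact ENNReal.ofReal_le_ofReal (key_real hR hα1 hα2)
end

section
/- Fix 1 ≤ p ≤ 2, x ∈ ℝ^m with ‖x‖_p ≤ 1, a round r, and a coordinate i ∈ [m]. Let H^{(r)} ∈ [G]^m have i.i.d. uniform entries and σ_{r1},...,σ_{rm} i.i.d. uniform ±1, independent of H^{(r)}. Define Ŷ_{r,i} = σ_{ri} ∑_{j : H_j^{(r)} = H_i^{(r)}} σ_{rj} x_j. Then for every k ∈ [m] with G > 8k, ℙ(|Ŷ_{r,i} − x_i| > k^{−1/p}) ≤ 2k/G. -/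
open Finset MeasureTheory
open scoped ENNReal

lemma pm_sq (b : Bool) : pm b * pm b = 1 := by cases b <;> simp [pm]

lemma pm_abs (b : Bool) : |pm b| = 1 := by cases b <;> simp [pm]

lemma sum_eval_one {ι α : Type*} [Fintype ι] [DecidableEq ι] [Fintype α] (j : ι) (F : α → ℝ) :
    ∑ f : ι → α, F (f j) = (Fintype.card α : ℝ) ^ (Fintype.card ι - 1) * ∑ a, F a := by
  rw [← Equiv.sum_comp (Equiv.funSplitAt j α).symm (fun f => F (f j)), Fintype.sum_prod_type]
  simp only [Equiv.funSplitAt_symm_apply, dif_pos rfl]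
  simp [Finset.sum_const, Fintype.card_fun, Fintype.card_subtype_compl,
    Fintype.card_subtype_eq, ← Finset.sum_mul, mul_comm]

lemma sum_eval_two {ι α : Type*} [Fintype ι] [DecidableEq ι] [Fintype α] {i j : ι}
    (hij : j ≠ i) (F : α → α → ℝ) :
    ∑ f : ι → α, F (f i) (f j)
      = (Fintype.card α : ℝ) ^ (Fintype.card ι - 2) * ∑ a, ∑ b, F a b := by
  rw [← Equiv.sum_comp (Equiv.funSplitAt i α).symm (fun f => F (f i) (f j)),
    Fintype.sum_prod_type]
  simp only [Equiv.funSplitAt_symm_apply, dif_pos rfl, dite_true, dif_neg hij]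
  have : ∀ a : α, ∑ g : {t // t ≠ i} → α, F a (g ⟨j, hij⟩)
      = (Fintype.card α : ℝ) ^ (Fintype.card {t // t ≠ i} - 1) * ∑ b, F a b := fun a =>
    sum_eval_one (⟨j, hij⟩ : {t // t ≠ i}) (fun b => F a b)
  rw [Finset.sum_congr rfl fun a _ => this a]
  have hcard : Fintype.card {t // t ≠ i} = Fintype.card ι - 1 := by
    simp [Fintype.card_subtype_compl, Fintype.card_subtype_eq]
  rw [hcard, ← Finset.mul_sum, Nat.sub_sub]

lemma hash_count {m G : ℕ} [NeZero G] {i j : Fin m} (hij : j ≠ i) :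
    ∑ f : Fin m → Fin G, (if f j = f i then (1:ℝ) else 0) = (G:ℝ) ^ (m - 1) := by
  have h2 : 2 ≤ m := by
    have : (j : ℕ) ≠ (i : ℕ) := fun h => hij (Fin.ext h)
    have := j.2; have := i.2; omega
  rw [show (fun f : Fin m → Fin G => (if f j = f i then (1:ℝ) else 0))
      = fun f => (fun a b => if b = a then (1:ℝ) else 0) (f i) (f j) from rfl,
    sum_eval_two hij (fun a b => if b = a then (1:ℝ) else 0)]
  simp only [Finset.sum_ite_eq', Finset.mem_univ, if_true, Finset.sum_const, card_univ,
    Fintype.card_fin, nsmul_eq_mul, mul_one]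
  rw [← pow_succ]
  congr 1
  omega

lemma sign_orth {m : ℕ} {j l : Fin m} (h : j ≠ l) :
    ∑ σ : Fin m → Bool, pm (σ j) * pm (σ l) = 0 := by
  rw [show (fun σ : Fin m → Bool => pm (σ j) * pm (σ l))
      = fun σ => (fun a b => pm a * pm b) (σ j) (σ l) from rfl,
    sum_eval_two h.symm (fun a b => pm a * pm b)]
  simp [pm, ← Finset.mul_sum]

lemma unif_meas {Ω : Type*} [Fintype Ω] [Nonempty Ω] (pred : Ω → Prop) [DecidablePred pred] :
    (@PMF.toMeasure Ω ⊤ (PMF.uniformOfFintype Ω)) {ω | pred ω}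
      = ((Finset.univ.filter pred).card : ℝ≥0∞) / (Fintype.card Ω : ℝ≥0∞) := by
  letI : MeasurableSpace Ω := ⊤
  rw [PMF.toMeasure_apply_eq_toOuterMeasure_apply (hs := MeasurableSpace.measurableSet_top),
    PMF.toOuterMeasure_apply_fintype]
  simp [Set.indicator_apply, PMF.uniformOfFintype_apply, Finset.sum_ite, div_eq_mul_inv,
    Set.mem_setOf_eq]

/-- **Per-round CountSketch estimate.** Model one round of CountSketch on the canonical
space `Ω = (Fin m → Fin G) × (Fin m → Bool)` with the uniform distribution: `ω.1` is the
hash vector with i.i.d. uniform entries and `ω.2` encodes i.i.d. uniform `±1` signs,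
independent of the hashing. For `Ŷ_i = σ_i ∑_{j : H_j = H_i} σ_j x_j`, `1 ≤ p ≤ 2`,
`‖x‖_p ≤ 1`, and every `k ∈ [m]` with `G > 8k`,
`ℙ(|Ŷ_i - x_i| > k^{-1/p}) ≤ 2k/G`. -/
theorem stmt14 {m G : ℕ} [NeZero G] (hm : 1 ≤ m) (p : ℝ) (hp1 : 1 ≤ p) (hp2 : p ≤ 2)
    (x : Fin m → ℝ) (hx : (∑ i, |x i| ^ p) ^ (1 / p) ≤ 1) (i : Fin m)
    (k : ℕ) (hk1 : 1 ≤ k) (hkm : k ≤ m) (hG : 8 * k < G) :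
    (@PMF.toMeasure ((Fin m → Fin G) × (Fin m → Bool)) ⊤ (PMF.uniformOfFintype _))
        {ω | (k : ℝ) ^ (-(1 / p)) <
          |pm (ω.2 i) * (∑ j ∈ Finset.univ.filter fun j => ω.1 j = ω.1 i,
              pm (ω.2 j) * x j) - x i|}
      ≤ ENNReal.ofReal (2 * (k : ℝ) / (G : ℝ)) := by
  classical
  set Ω := (Fin m → Fin G) × (Fin m → Bool)
  have hp0 : 0 < p := lt_of_lt_of_le one_pos hp1
  have hkpos : (0:ℝ) < k := by exact_mod_cast hk1
  have hGpos : (0:ℝ) < G := by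
    have := (NeZero.pos G); exact_mod_cast this
  set ε : ℝ := (k : ℝ) ^ (-(1 / p)) with hεdef
  have hε : 0 < ε := Real.rpow_pos_of_pos hkpos _
  have hεpk : ε ^ p = (k:ℝ)⁻¹ := by
    rw [hεdef, ← Real.rpow_mul hkpos.le, neg_mul, one_div, inv_mul_cancel₀ (ne_of_gt hp0),
      Real.rpow_neg_one]
  have hsum0 : 0 ≤ ∑ j, |x j| ^ p :=
    Finset.sum_nonneg fun j _ => Real.rpow_nonneg (abs_nonneg _) _
  have hsum1 : ∑ j, |x j| ^ p ≤ 1 := by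
    by_contra hcon
    push_neg at hcon
    have := Real.one_lt_rpow_iff_of_pos (lt_trans one_pos hcon) (y := 1/p)
    have h1 : 1 < (∑ j, |x j| ^ p) ^ (1/p) := this.mpr (Or.inl ⟨hcon, by positivity⟩)
    linarith
  set Q : Finset (Fin m) := Finset.univ.filter (fun j => ε < |x j|) with hQdef
  have hQk : (Q.card : ℝ) ≤ k := by
    have hterm : ∀ j ∈ Q, (k:ℝ)⁻¹ ≤ |x j| ^ p := by
      intro j hj
      rw [hQdef, Finset.mem_filter] at hj
      rw [← hεpk]
      exact Real.rpow_le_rpow hε.le hj.2.le hp0.le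
    have h1 : (Q.card : ℝ) * (k:ℝ)⁻¹ ≤ ∑ j ∈ Q, |x j| ^ p := by
      calc (Q.card : ℝ) * (k:ℝ)⁻¹ = ∑ _j ∈ Q, (k:ℝ)⁻¹ := by
            rw [Finset.sum_const, nsmul_eq_mul]
        _ ≤ ∑ j ∈ Q, |x j| ^ p := Finset.sum_le_sum hterm
    have h2 : ∑ j ∈ Q, |x j| ^ p ≤ 1 :=
      le_trans (Finset.sum_le_sum_of_subset_of_nonneg (Finset.subset_univ Q)
        (fun j _ _ => Real.rpow_nonneg (abs_nonneg _) _)) hsum1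
    have h3 : (Q.card : ℝ) * (k:ℝ)⁻¹ ≤ 1 := le_trans h1 h2
    calc (Q.card : ℝ) = (Q.card : ℝ) * (k:ℝ)⁻¹ * k := by
          field_simp
      _ ≤ 1 * k := mul_le_mul_of_nonneg_right h3 hkpos.le
      _ = k := one_mul _
  set S : Finset (Fin m) := Finset.univ \ insert i Q with hSdef
  have hSne : ∀ j ∈ S, j ≠ i := by
    intro j hj
    simp only [hSdef, Finset.mem_sdiff, Finset.mem_insert] at hj
    exact fun h => hj.2 (Or.inl h)
  have hSQ : ∀ j ∈ S, |x j| ≤ ε := by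
    intro j hj
    simp only [hSdef, Finset.mem_sdiff, Finset.mem_insert, hQdef, Finset.mem_filter] at hj
    push_neg at hj
    exact hj.2.2 (Finset.mem_univ j)
  set Z : Ω → ℝ := fun ω => ∑ j ∈ S, (if ω.1 j = ω.1 i then (1:ℝ) else 0) * (pm (ω.2 j) * x j)
    with hZdef
  have hrpow2 : ∀ y : ℝ, y ^ (2:ℝ) = y ^ 2 := fun y => by
    rw [show (2:ℝ) = ((2:ℕ):ℝ) by norm_num, Real.rpow_natCast]
  have htail : ∑ j ∈ S, (x j)^2 ≤ ε ^ ((2:ℝ) - p) := by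
    have hterm : ∀ j ∈ S, (x j)^2 ≤ ε ^ ((2:ℝ) - p) * |x j| ^ p := by
      intro j hj
      rcases eq_or_ne (x j) 0 with h0 | h0
      · rw [h0]
        simp [Real.zero_rpow (ne_of_gt hp0)]
      · have habs : 0 < |x j| := abs_pos.mpr h0
        have : (x j)^2 = |x j| ^ ((2:ℝ) - p) * |x j| ^ p := by
          rw [← Real.rpow_add habs, sub_add_cancel, hrpow2, sq_abs]
        rw [this]
        exact mul_le_mul_of_nonneg_right
          (Real.rpow_le_rpow (abs_nonneg _) (hSQ j hj) (by linarith))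
          (Real.rpow_nonneg (abs_nonneg _) _)
    calc ∑ j ∈ S, (x j)^2 ≤ ∑ j ∈ S, ε ^ ((2:ℝ) - p) * |x j| ^ p :=
          Finset.sum_le_sum hterm
      _ = ε ^ ((2:ℝ) - p) * ∑ j ∈ S, |x j| ^ p := by rw [Finset.mul_sum]
      _ ≤ ε ^ ((2:ℝ) - p) * 1 := by
          refine mul_le_mul_of_nonneg_left ?_ (Real.rpow_nonneg hε.le _)
          exact le_trans (Finset.sum_le_sum_of_subset_of_nonneg (Finset.subset_univ S)
            (fun j _ _ => Real.rpow_nonneg (abs_nonneg _) _)) hsum1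
      _ = ε ^ ((2:ℝ) - p) := mul_one _
  have h2p : ε ^ ((2:ℝ) - p) = ε ^ 2 * k := by
    rw [Real.rpow_sub hε, hεpk, hrpow2, div_eq_mul_inv, inv_inv]
  set FA : Finset Ω := Finset.univ.filter (fun ω : Ω => ε <
    |pm (ω.2 i) * (∑ j ∈ Finset.univ.filter fun j => ω.1 j = ω.1 i,
      pm (ω.2 j) * x j) - x i|) with hFAdef
  set FB : Finset Ω := Finset.univ.filter (fun ω : Ω => ∃ j ∈ Q.erase i, ω.1 j = ω.1 i)
    with hFBdef
  set FC : Finset Ω := Finset.univ.filter (fun ω : Ω => ε < |Z ω|) with hFCdef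
  have hone : ∀ j : Fin m, j ≠ i →
      ((Finset.univ.filter fun ω : Ω => ω.1 j = ω.1 i).card : ℝ) = (G:ℝ)^(m-1) * 2^m := by
    intro j hj
    rw [← Finset.sum_boole, Fintype.sum_prod_type, Finset.sum_comm,
      Finset.sum_congr rfl (fun (σ : Fin m → Bool) _ => hash_count (G := G) hj)]
    rw [Finset.sum_const, card_univ, Fintype.card_fun, Fintype.card_bool, Fintype.card_fin,
      nsmul_eq_mul]
    push_cast
    ring
  have hvar : ∑ ω : Ω, (Z ω)^2 = (G:ℝ)^(m-1) * 2^m * ∑ j ∈ S, (x j)^2 := by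
    rw [Fintype.sum_prod_type]
    have hinner : ∀ h : Fin m → Fin G,
        ∑ σ : Fin m → Bool, (Z (h, σ))^2
          = 2^m * ∑ j ∈ S, (if h j = h i then (1:ℝ) else 0) * (x j)^2 := by
      intro h
      have hZ : ∀ σ : Fin m → Bool, (Z (h, σ))^2 =
          ∑ j ∈ S, ∑ l ∈ S, ((if h j = h i then (1:ℝ) else 0) * x j)
            * ((if h l = h i then (1:ℝ) else 0) * x l) * (pm (σ j) * pm (σ l)) := by
        intro σ
        rw [hZdef]
        dsimp only
        rw [sq, Finset.sum_mul_sum]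
        refine Finset.sum_congr rfl fun j _ => Finset.sum_congr rfl fun l _ => by ring
      rw [Finset.sum_congr rfl fun σ _ => hZ σ, Finset.sum_comm]
      rw [Finset.sum_congr rfl fun j _ => Finset.sum_comm]
      have hdiag : ∀ j ∈ S,
          ∑ l ∈ S, ∑ σ : Fin m → Bool, ((if h j = h i then (1:ℝ) else 0) * x j)
            * ((if h l = h i then (1:ℝ) else 0) * x l) * (pm (σ j) * pm (σ l))
          = 2^m * ((if h j = h i then (1:ℝ) else 0) * (x j)^2) := by
        intro j hjS
        rw [Finset.sum_eq_single_of_mem j hjS]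
        · have : ∑ σ : Fin m → Bool, ((if h j = h i then (1:ℝ) else 0) * x j)
              * ((if h j = h i then (1:ℝ) else 0) * x j) * (pm (σ j) * pm (σ j))
              = ∑ σ : Fin m → Bool, ((if h j = h i then (1:ℝ) else 0) * x j)
              * ((if h j = h i then (1:ℝ) else 0) * x j) := by
            refine Finset.sum_congr rfl fun σ _ => by rw [pm_sq, mul_one]
          rw [this, Finset.sum_const, card_univ, Fintype.card_fun, Fintype.card_bool,
            Fintype.card_fin, nsmul_eq_mul]
          push_cast
          by_cases hc : h j = h i <;> simp [hc] <;> ring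
        · intro l _ hlj
          rw [← Finset.mul_sum, sign_orth (Ne.symm hlj), mul_zero]
      rw [Finset.sum_congr rfl hdiag, ← Finset.mul_sum]
    rw [Finset.sum_congr rfl fun h _ => hinner h, ← Finset.mul_sum, Finset.sum_comm]
    have hj2 : ∀ j ∈ S, ∑ h : Fin m → Fin G, (if h j = h i then (1:ℝ) else 0) * (x j)^2
        = (G:ℝ)^(m-1) * (x j)^2 := by
      intro j hjS
      rw [← Finset.sum_mul, hash_count (hSne j hjS)]
    rw [Finset.sum_congr rfl hj2, ← Finset.mul_sum]
    ring
  have hBC : FA ⊆ FB ∪ FC := by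
    intro ω hω
    rw [hFAdef, Finset.mem_filter] at hω
    rw [Finset.mem_union, hFBdef, hFCdef, Finset.mem_filter, Finset.mem_filter]
    by_cases hcol : ∃ j ∈ Q.erase i, ω.1 j = ω.1 i
    · exact Or.inl ⟨Finset.mem_univ ω, hcol⟩
    · push_neg at hcol
      refine Or.inr ⟨Finset.mem_univ ω, ?_⟩
      have hT : (Finset.univ.filter fun j => ω.1 j = ω.1 i).erase i
          = S.filter (fun j => ω.1 j = ω.1 i) := by
        ext j
        constructor
        · intro hjmem
          rw [Finset.mem_erase, Finset.mem_filter] at hjmem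
          obtain ⟨hji, _, hcoll⟩ := hjmem
          rw [Finset.mem_filter]
          refine ⟨?_, hcoll⟩
          rw [hSdef, Finset.mem_sdiff]
          refine ⟨Finset.mem_univ j, ?_⟩
          rw [Finset.mem_insert]
          rintro (h | hQj)
          · exact hji h
          · exact hcol j (Finset.mem_erase.mpr ⟨hji, hQj⟩) hcoll
        · intro hjmem
          rw [Finset.mem_filter] at hjmem
          obtain ⟨hjS, hcoll⟩ := hjmem
          rw [Finset.mem_erase, Finset.mem_filter]
          exact ⟨hSne j hjS, ⟨Finset.mem_univ j, hcoll⟩⟩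
      have hiT : i ∈ Finset.univ.filter fun j => ω.1 j = ω.1 i := by
        simp [Finset.mem_filter]
      have hsplit : ∑ j ∈ Finset.univ.filter (fun j => ω.1 j = ω.1 i), pm (ω.2 j) * x j
          = pm (ω.2 i) * x i + Z ω := by
        rw [← Finset.add_sum_erase _ _ hiT, hT, hZdef]
        dsimp only
        rw [Finset.sum_filter]
        congr 1
        refine Finset.sum_congr rfl fun j _ => ?_
        by_cases hc : ω.1 j = ω.1 i <;> simp [hc]
      have habs : |pm (ω.2 i) * (∑ j ∈ Finset.univ.filter (fun j => ω.1 j = ω.1 i),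
          pm (ω.2 j) * x j) - x i| = |Z ω| := by
        rw [hsplit, mul_add, ← mul_assoc, pm_sq, one_mul, add_sub_cancel_left,
          abs_mul, pm_abs, one_mul]
      rw [← habs]
      exact hω.2
  have hcB : (FB.card : ℝ) ≤ k * ((G:ℝ)^(m-1) * 2^m) := by
    have hsub : FB ⊆ (Q.erase i).biUnion
        (fun j => Finset.univ.filter fun ω : Ω => ω.1 j = ω.1 i) := by
      intro ω hω
      rw [hFBdef, Finset.mem_filter] at hω
      obtain ⟨j, hjQ, hcoll⟩ := hω.2
      exact Finset.mem_biUnion.mpr ⟨j, hjQ, Finset.mem_filter.mpr ⟨Finset.mem_univ ω, hcoll⟩⟩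
    have h1 : (FB.card : ℕ) ≤ ∑ j ∈ Q.erase i,
        (Finset.univ.filter fun ω : Ω => ω.1 j = ω.1 i).card :=
      le_trans (Finset.card_le_card hsub) (Finset.card_biUnion_le)
    have h2 : (FB.card : ℝ) ≤ ∑ j ∈ Q.erase i,
        ((Finset.univ.filter fun ω : Ω => ω.1 j = ω.1 i).card : ℝ) := by
      exact_mod_cast h1
    calc (FB.card : ℝ) ≤ ∑ j ∈ Q.erase i,
          ((Finset.univ.filter fun ω : Ω => ω.1 j = ω.1 i).card : ℝ) := h2
      _ = ∑ j ∈ Q.erase i, (G:ℝ)^(m-1) * 2^m :=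
          Finset.sum_congr rfl fun j hj => hone j (Finset.ne_of_mem_erase hj)
      _ = ((Q.erase i).card : ℝ) * ((G:ℝ)^(m-1) * 2^m) := by
          rw [Finset.sum_const, nsmul_eq_mul]
      _ ≤ k * ((G:ℝ)^(m-1) * 2^m) := by
          refine mul_le_mul_of_nonneg_right ?_ (by positivity)
          calc ((Q.erase i).card : ℝ) ≤ (Q.card : ℝ) := by
                exact_mod_cast Finset.card_le_card (Finset.erase_subset i Q)
            _ ≤ k := hQk
  have hcC : (FC.card : ℝ) ≤ k * ((G:ℝ)^(m-1) * 2^m) := by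
    have hcheb : ε^2 * (FC.card : ℝ) ≤ ∑ ω : Ω, (Z ω)^2 := by
      calc ε^2 * (FC.card : ℝ) = ∑ _ω ∈ FC, ε^2 := by
            rw [Finset.sum_const, nsmul_eq_mul]; ring
        _ ≤ ∑ ω ∈ FC, (Z ω)^2 := by
            refine Finset.sum_le_sum fun ω hω => ?_
            rw [hFCdef, Finset.mem_filter] at hω
            calc ε^2 ≤ |Z ω|^2 := pow_le_pow_left₀ hε.le (le_of_lt hω.2) 2
              _ = (Z ω)^2 := sq_abs _
        _ ≤ ∑ ω : Ω, (Z ω)^2 := Finset.sum_le_sum_of_subset_of_nonneg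
            (Finset.subset_univ FC) (fun ω _ _ => sq_nonneg _)
    rw [hvar] at hcheb
    have hbound : (G:ℝ)^(m-1) * 2^m * ∑ j ∈ S, (x j)^2
        ≤ (G:ℝ)^(m-1) * 2^m * (ε^2 * k) := by
      refine mul_le_mul_of_nonneg_left ?_ (by positivity)
      rw [← h2p]
      exact htail
    have : ε^2 * (FC.card : ℝ) ≤ ε^2 * (k * ((G:ℝ)^(m-1) * 2^m)) := by
      calc ε^2 * (FC.card : ℝ) ≤ (G:ℝ)^(m-1) * 2^m * (ε^2 * k) := le_trans hcheb hbound
        _ = ε^2 * (k * ((G:ℝ)^(m-1) * 2^m)) := by ring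
    exact le_of_mul_le_mul_left this (by positivity)
  have hcA : (FA.card : ℝ) ≤ 2 * k * ((G:ℝ)^(m-1) * 2^m) := by
    calc (FA.card : ℝ) ≤ ((FB ∪ FC).card : ℝ) := by
          exact_mod_cast Finset.card_le_card hBC
      _ ≤ (FB.card : ℝ) + FC.card := by exact_mod_cast Finset.card_union_le FB FC
      _ ≤ k * ((G:ℝ)^(m-1) * 2^m) + k * ((G:ℝ)^(m-1) * 2^m) := add_le_add hcB hcC
      _ = 2 * k * ((G:ℝ)^(m-1) * 2^m) := by ring
  -- final assembly
  have hmeas := unif_meas (Ω := Ω) (fun ω : Ω => ε <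
    |pm (ω.2 i) * (∑ j ∈ Finset.univ.filter fun j => ω.1 j = ω.1 i,
      pm (ω.2 j) * x j) - x i|)
  rw [hmeas]
  have hcardΩ : (Fintype.card Ω : ℝ) = (G:ℝ)^m * 2^m := by
    simp [Ω, Fintype.card_prod, Fintype.card_fun, Fintype.card_fin, Fintype.card_bool]
  have hreal : (FA.card : ℝ) ≤ 2 * k / G * (Fintype.card Ω : ℝ) := by
    rw [hcardΩ]
    have hGm : (G:ℝ)^m = G * (G:ℝ)^(m-1) := by
      conv_lhs => rw [show m = (m-1) + 1 by omega]
      rw [pow_succ]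
      ring
    calc (FA.card : ℝ) ≤ 2 * k * ((G:ℝ)^(m-1) * 2^m) := hcA
      _ = 2 * k / G * ((G * (G:ℝ)^(m-1)) * 2^m) := by
          field_simp
      _ = 2 * k / G * ((G:ℝ)^m * 2^m) := by rw [← hGm]
  have hNpos : (0:ℝ) < (Fintype.card Ω : ℝ) := by
    rw [hcardΩ]; positivity
  refine ENNReal.div_le_of_le_mul ?_
  have e1 : ((FA.card : ℕ) : ℝ≥0∞) = ENNReal.ofReal (FA.card : ℝ) := by
    rw [ENNReal.ofReal_natCast]
  have e2 : ((Fintype.card Ω : ℕ) : ℝ≥0∞) = ENNReal.ofReal ((Fintype.card Ω : ℕ) : ℝ) := by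
    rw [ENNReal.ofReal_natCast]
  rw [e1, e2, ← ENNReal.ofReal_mul (by positivity)]
  exact ENNReal.ofReal_le_ofReal hreal
end

section
/- Let 1 ≤ p < q < ∞, ε ∈ (0,1), k = ⌊ε^{−p}⌋, and m ≥ 2k+1. Let x ∈ ℝ^m have exactly 2k+1 entries equal to (2k+1)^{−1/p} and the rest zero (so ‖x‖_p = 1). Then for any vector w ∈ ℝ^m supported on at most k coordinates, ‖w − x‖_q ≥ 3^{−1/p}·ε^{1 − p/q}. -/
/-!
Any `w` with at most `k` nonzero coordinates vanishes on at least `k + 1` of the `2k + 1`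
coordinates where `x` equals `c = (2k+1)^{-1/p}`, so `‖w - x‖_q ≥ (k+1)^{1/q} c`.
Since `k ≤ ε^{-p} < k + 1` and `ε^{-p} ≥ 1`, we have `(k+1)^{1/q} ≥ ε^{-p/q}` and
`2k + 1 ≤ 3 ε^{-p}`, i.e. `c ≥ 3^{-1/p} ε`.
-/

open Finset

theorem card_rpow_mul_le_sum_abs_sub_rpow {ι : Type*} [Fintype ι] {w x : ι → ℝ}
    {S : Finset ι} {c q : ℝ} (hc : 0 ≤ c) (hq : 0 < q) (hS : ∀ i ∈ S, c ≤ |w i - x i|) :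
    (#S : ℝ) ^ (1 / q) * c ≤ (∑ i, |w i - x i| ^ q) ^ (1 / q) := by
  have hsum : (#S : ℝ) * c ^ q ≤ ∑ i, |w i - x i| ^ q :=
    calc (#S : ℝ) * c ^ q = ∑ i ∈ S, c ^ q := by rw [sum_const, nsmul_eq_mul]
      _ ≤ ∑ i ∈ S, |w i - x i| ^ q :=
          sum_le_sum fun i hi => Real.rpow_le_rpow hc (hS i hi) hq.le
      _ ≤ ∑ i, |w i - x i| ^ q :=
          sum_le_sum_of_subset_of_nonneg (subset_univ S) fun i _ _ => by positivity
  calc (#S : ℝ) ^ (1 / q) * c = ((#S : ℝ) * c ^ q) ^ (1 / q) := by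
        rw [Real.mul_rpow (by positivity) (by positivity), ← Real.rpow_mul hc,
          mul_one_div_cancel hq.ne', Real.rpow_one]
    _ ≤ (∑ i, |w i - x i| ^ q) ^ (1 / q) :=
        Real.rpow_le_rpow (by positivity) hsum (by positivity)

theorem rpow_neg_div_le_floor_add_one_rpow {p q ε : ℝ} (hq : 0 < q) (hε : 0 < ε) :
    ε ^ (-(p / q)) ≤ ((⌊ε ^ (-p)⌋₊ : ℝ) + 1) ^ (1 / q) := by
  rw [show -(p / q) = -p * (1 / q) by ring, Real.rpow_mul hε.le]
  exact Real.rpow_le_rpow (by positivity) (Nat.lt_floor_add_one _).le (by positivity)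

theorem rpow_neg_inv_mul_le_two_floor_add_one_rpow {p ε : ℝ} (hp : 0 < p) (hε0 : 0 < ε)
    (hε1 : ε ≤ 1) :
    (3 : ℝ) ^ (-(1 / p)) * ε ≤ ((2 * ⌊ε ^ (-p)⌋₊ + 1 : ℕ) : ℝ) ^ (-(1 / p)) := by
  have hone : 1 ≤ ε ^ (-p) := Real.one_le_rpow_of_pos_of_le_one_of_nonpos hε0 hε1 (by linarith)
  have hcard : ((2 * ⌊ε ^ (-p)⌋₊ + 1 : ℕ) : ℝ) ≤ 3 * ε ^ (-p) := by
    have := Nat.floor_le (zero_le_one.trans hone)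
    push_cast
    linarith
  calc (3 : ℝ) ^ (-(1 / p)) * ε = (3 * ε ^ (-p)) ^ (-(1 / p)) := by
        rw [Real.mul_rpow (by norm_num) (by positivity), ← Real.rpow_mul hε0.le,
          show -p * -(1 / p) = 1 by field_simp, Real.rpow_one]
    _ ≤ ((2 * ⌊ε ^ (-p)⌋₊ + 1 : ℕ) : ℝ) ^ (-(1 / p)) :=
        Real.rpow_le_rpow_of_nonpos (by positivity) hcard (by simp [hp.le])

theorem stmt16_general {m : ℕ} (p q : ℝ) (hp : 1 ≤ p) (hpq : p < q)
    (ε : ℝ) (hε : ε ∈ Set.Ioo (0 : ℝ) 1)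
    (k : ℕ) (hk : k = ⌊ε ^ (-p)⌋₊)
    (x : Fin m → ℝ) (T : Finset (Fin m)) (hT : T.card = 2 * k + 1)
    (hxT : ∀ i, x i = if i ∈ T then ((2 * k + 1 : ℕ) : ℝ) ^ (-(1 / p)) else 0)
    (w : Fin m → ℝ) (hw : (Finset.univ.filter fun i => w i ≠ 0).card ≤ k) :
    (3 : ℝ) ^ (-(1 / p)) * ε ^ (1 - p / q)
      ≤ (∑ i, |w i - x i| ^ q) ^ (1 / q) := by
  obtain ⟨hε0, hε1⟩ := hε
  have hp0 : 0 < p := by linarith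
  have hq0 : 0 < q := by linarith
  set c : ℝ := ((2 * k + 1 : ℕ) : ℝ) ^ (-(1 / p))
  set S := T \ univ.filter fun i => w i ≠ 0
  have hS : k + 1 ≤ #S := by
    have : #T - #(univ.filter fun i => w i ≠ 0) ≤ #S := le_card_sdiff _ _
    omega
  have hSc : ∀ i ∈ S, c ≤ |w i - x i| := fun i hi => by
    obtain ⟨hiT, hiw⟩ := mem_sdiff.mp hi
    have hwi : w i = 0 := by simpa using hiw
    rw [hxT i, if_pos hiT, hwi, zero_sub, abs_neg]
    exact le_abs_self c
  calc (3 : ℝ) ^ (-(1 / p)) * ε ^ (1 - p / q)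
      = ((3 : ℝ) ^ (-(1 / p)) * ε) * ε ^ (-(p / q)) := by
        rw [sub_eq_add_neg, Real.rpow_add hε0, Real.rpow_one, mul_assoc]
    _ ≤ c * ((k : ℝ) + 1) ^ (1 / q) := by
        subst hk
        gcongr
        · exact rpow_neg_inv_mul_le_two_floor_add_one_rpow hp0 hε0 hε1.le
        · exact rpow_neg_div_le_floor_add_one_rpow hq0 hε0
    _ ≤ (#S : ℝ) ^ (1 / q) * c := by
        rw [mul_comm]
        gcongr
        exact_mod_cast hS
    _ ≤ (∑ i, |w i - x i| ^ q) ^ (1 / q) :=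
        card_rpow_mul_le_sum_abs_sub_rpow (by positivity) hq0 hSc

/-- **Lower bound for denoised outputs.** Let `1 ≤ p < q < ∞`, `ε ∈ (0,1)`,
`k = ⌊ε^{-p}⌋`, `m ≥ 2k+1`, and let `x ∈ ℝ^m` have exactly `2k+1` entries equal to
`(2k+1)^{-1/p}` and all other entries `0` (so `‖x‖_p = 1`). Then every `w ∈ ℝ^m`
supported on at most `k` coordinates satisfies `‖w - x‖_q ≥ 3^{-1/p}·ε^{1-p/q}`. -/
theorem stmt16 {m : ℕ} (p q : ℝ) (hp : 1 ≤ p) (hpq : p < q)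
    (ε : ℝ) (hε : ε ∈ Set.Ioo (0 : ℝ) 1)
    (k : ℕ) (hk : k = ⌊ε ^ (-p)⌋₊) (hm : 2 * k + 1 ≤ m)
    (x : Fin m → ℝ) (T : Finset (Fin m)) (hT : T.card = 2 * k + 1)
    (hxT : ∀ i, x i = if i ∈ T then ((2 * k + 1 : ℕ) : ℝ) ^ (-(1 / p)) else 0)
    (w : Fin m → ℝ) (hw : (Finset.univ.filter fun i => w i ≠ 0).card ≤ k) :
    (3 : ℝ) ^ (-(1 / p)) * ε ^ (1 - p / q)
      ≤ (∑ i, |w i - x i| ^ q) ^ (1 / q) :=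
  stmt16_general p q hp hpq ε hε k hk x T hT hxT w hw
end
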